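/- arXiv:2605.19959 — 7 statements merged into one kernel-verified Lean document; each statement's English description precedes it below -/
import Mathlib

section
/- Let H be an infinite-dimensional separable real Hilbert space and let Q be a bounded operator on H with Q† ∘ Q = 1. Suppose there is a finite-dimensional subspace V of H such that Q v = v for every v in the orthogonal complement of V, Q maps V into itself, and the restriction of Q to V (as a linear automorphism of the finite-dimensional space V) has determinant 1. Then there exist T > 0, continuous curves α, β : ℝ → H, and a map R : ℝ → (H →L[ℝ] H) such that R 0 = 1, for every t ∈ ℝ the map R has derivative (K_t) ∘ (R t) at t where K_t x = ⟪β t, x⟫ • (α t) − ⟪α t, x⟫ • (β t), and R T = Q exactly. -/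
/-!
By Cartan–Dieudonné, the restriction of `Q` to `V` is a product of hyperplane reflections, and
`det = 1` makes their number even. Two reflections compose to a rotation in the plane of their
normals, and the rotation by `θ` in the plane of an orthonormal pair `a, b` is reached by the flow
of the rank-two generator `θ s'(t) (a ∧ b)`, with `s` a smooth transition from `0` to `1`.
Solutions whose controls vanish outside their time window can be concatenated, so the operators
reachable in this way form a submonoid; it contains `Q`.
-/

open ContinuousLinearMap Submodule
open scoped RealInnerProductSpace

theorem Submonoid.list_prod_map_mem_of_mul_mem {M α : Type*} [Monoid M] (S : Submonoid M)
    {p : α → Prop} {f : α → M} (hf : ∀ a b, p a → p b → f a * f b ∈ S) :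
    ∀ {l : List α}, (∀ a ∈ l, p a) → Even l.length → (l.map f).prod ∈ S
  | [], _, _ => S.one_mem
  | [_], _, h => absurd h (by simp)
  | a :: b :: l, hl, h => by
    rw [List.map_cons, List.map_cons, List.prod_cons, List.prod_cons, ← mul_assoc]
    refine S.mul_mem (hf a b (hl a (by simp)) (hl b (by simp))) ?_
    exact S.list_prod_map_mem_of_mul_mem hf (fun c hc => hl c (by simp [hc]))
      (by simpa [Nat.even_add_one] using h)

open Real in
lemma deriv_smoothTransition_eq_zero {x : ℝ} (hx : x ≤ 0 ∨ 1 ≤ x) :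
    deriv smoothTransition x = 0 := by
  rcases hx with hx | hx
  · refine IsLocalMin.deriv_eq_zero (Filter.Eventually.of_forall fun y => ?_)
    simpa [smoothTransition.zero_of_nonpos hx] using smoothTransition.nonneg y
  · refine IsLocalMax.deriv_eq_zero (Filter.Eventually.of_forall fun y => ?_)
    simpa [smoothTransition.one_of_one_le hx] using smoothTransition.le_one y

section Reflections

variable {F : Type*} [NormedAddCommGroup F] [InnerProductSpace ℝ F]

lemma reflection_orthogonal_singleton_apply (v x : F) :
    (ℝ ∙ v)ᗮ.reflection x = x - (2 * ⟪v, x⟫ / ‖v‖ ^ 2) • v := by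
  rw [reflection_orthogonal_apply, reflection_singleton_apply]
  simp only [neg_sub, sub_right_inj]
  match_scalars
  simp [mul_div_assoc]

lemma reflection_orthogonal_span_zero : (ℝ ∙ (0 : F))ᗮ.reflection = 1 := by
  ext x
  exact reflection_mem_subspace_eq_self (by simp)

lemma prod_reflections_filter_ne_zero [DecidableEq F] (l : List F) :
    ((l.filter (· ≠ 0)).map fun v => (ℝ ∙ v)ᗮ.reflection).prod
      = (l.map fun v => (ℝ ∙ v)ᗮ.reflection).prod := by
  induction l with
  | nil => rfl
  | cons v l ih =>
    by_cases hv : v = 0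
    · rw [List.filter_cons_of_neg (by simpa using hv), ih, List.map_cons, List.prod_cons, hv,
        reflection_orthogonal_span_zero, one_mul]
    · rw [List.filter_cons_of_pos (by simpa using hv), List.map_cons, List.map_cons,
        List.prod_cons, List.prod_cons, ih]

variable [FiniteDimensional ℝ F]

lemma det_prod_reflections {l : List F} (hl : ∀ v ∈ l, v ≠ 0) :
    LinearMap.det ((l.map fun v => (ℝ ∙ v)ᗮ.reflection).prod.toLinearEquiv : F →ₗ[ℝ] F)
      = (-1) ^ l.length := by
  induction l with
  | nil => exact LinearMap.det_id
  | cons v l ih =>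
    rw [List.map_cons, List.prod_cons, List.length_cons, pow_succ', LinearIsometryEquiv.mul_def,
      LinearIsometryEquiv.toLinearEquiv_trans, LinearEquiv.coe_trans, LinearMap.det_comp,
      det_reflection, orthogonal_orthogonal, finrank_span_singleton (hl v (by simp)), pow_one,
      ih fun w hw => hl w (by simp [hw])]

-- Cartan–Dieudonné, with the parity of the number of reflections read off from the determinant.
lemma LinearIsometryEquiv.exists_even_reflections (φ : F ≃ₗᵢ[ℝ] F)
    (hφ : LinearMap.det (φ.toLinearEquiv : F →ₗ[ℝ] F) = 1) :
    ∃ l : List F, (∀ v ∈ l, v ≠ 0) ∧ Even l.length ∧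
      φ = (l.map fun v => (ℝ ∙ v)ᗮ.reflection).prod := by
  classical
  obtain ⟨l, -, rfl⟩ := φ.reflections_generate_dim
  have hl : ∀ v ∈ l.filter (· ≠ 0), v ≠ 0 := by simp
  refine ⟨l.filter (· ≠ 0), hl, ?_, (prod_reflections_filter_ne_zero l).symm⟩
  rw [← prod_reflections_filter_ne_zero, det_prod_reflections hl] at hφ
  exact (neg_one_pow_eq_one_iff_even (by norm_num)).1 hφ

end Reflections

section Restriction

variable {H : Type*} [NormedAddCommGroup H] [InnerProductSpace ℝ H] {V : Submodule ℝ H}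

lemma prod_reflections_apply_coe (l : List V) (x : V) :
    (l.map fun v : V => ((ℝ ∙ (v : H))ᗮ.reflection : H →L[ℝ] H)).prod x
      = ((l.map fun v => (ℝ ∙ v)ᗮ.reflection).prod x : V) := by
  induction l with
  | nil => rfl
  | cons v l ih =>
    simp only [List.map_cons, List.prod_cons, mul_apply_eq_comp, ih,
      LinearIsometryEquiv.coe_mul, Function.comp_apply]
    simp [reflection_orthogonal_singleton_apply]

lemma prod_reflections_apply_of_mem_orthogonal (l : List V) {y : H} (hy : y ∈ Vᗮ) :
    (l.map fun v : V => ((ℝ ∙ (v : H))ᗮ.reflection : H →L[ℝ] H)).prod y = y := by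
  induction l with
  | nil => rfl
  | cons v l ih =>
    simp only [List.map_cons, List.prod_cons, mul_apply_eq_comp, ih]
    exact reflection_mem_subspace_eq_self
      (mem_orthogonal_singleton_iff_inner_right.2 ((mem_orthogonal V y).1 hy v v.2))

end Restriction

namespace SkewControl

variable {H : Type*} [NormedAddCommGroup H] [InnerProductSpace ℝ H]

noncomputable def wedge (a b : H) : H →L[ℝ] H :=
  (innerSL ℝ b).smulRight a - (innerSL ℝ a).smulRight b

@[simp] lemma wedge_apply (a b x : H) : wedge a b x = ⟪b, x⟫ • a - ⟪a, x⟫ • b := by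
  simp [wedge]

@[simp] lemma wedge_zero_zero : wedge (0 : H) 0 = 0 := by
  ext x; simp

lemma wedge_smul_smul (c d : ℝ) (a b : H) : wedge (c • a) (d • b) = (c * d) • wedge a b := by
  ext x
  simp only [wedge_apply, real_inner_smul_left, smul_apply, smul_sub, smul_smul]
  ring_nf

noncomputable def planeRotation (a b : H) (θ : ℝ) : H →L[ℝ] H :=
  1 + (Real.cos θ - 1) • ((innerSL ℝ a).smulRight a + (innerSL ℝ b).smulRight b)
    + Real.sin θ • wedge a b

@[simp] lemma planeRotation_zero (a b : H) : planeRotation a b 0 = 1 := by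
  simp [planeRotation]

lemma wedge_comp_planeRotation {a b : H} (ha : ‖a‖ = 1) (hb : ‖b‖ = 1) (hab : ⟪a, b⟫ = 0)
    (θ : ℝ) :
    wedge a b ∘L planeRotation a b θ = Real.cos θ • wedge a b
      - Real.sin θ • ((innerSL ℝ a).smulRight a + (innerSL ℝ b).smulRight b) := by
  have hba : ⟪b, a⟫ = 0 := by rw [real_inner_comm]; exact hab
  ext x
  simp only [planeRotation, smul_add, comp_add, comp_smulₛₗ, Real.ringHom_apply, add_apply,
    comp_apply, one_apply_eq_self, wedge_apply, smul_apply, smulRight_apply, coe_innerSL_apply,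
    map_smul, hba, zero_smul, inner_self_eq_norm_sq_to_K, ha, one_pow, one_smul, zero_sub,
    smul_neg, smul_smul, hb, hab, sub_zero, inner_sub_right, real_inner_smul_right, mul_zero,
    mul_one, neg_smul, smul_sub, sub_apply]
  match_scalars <;> nlinarith [Real.sin_sq_add_cos_sq θ]

lemma hasDerivAt_planeRotation {a b : H} (ha : ‖a‖ = 1) (hb : ‖b‖ = 1) (hab : ⟪a, b⟫ = 0)
    (θ : ℝ) : HasDerivAt (planeRotation a b) (wedge a b ∘L planeRotation a b θ) θ := by
  rw [wedge_comp_planeRotation ha hb hab]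
  have h := ((hasDerivAt_const θ (1 : H →L[ℝ] H)).add
    (((Real.hasDerivAt_cos θ).sub_const 1).smul_const
      ((innerSL ℝ a).smulRight a + (innerSL ℝ b).smulRight b))).add
    ((Real.hasDerivAt_sin θ).smul_const (wedge a b))
  exact h.congr_deriv (by module)

lemma reflection_comp_reflection_eq_planeRotation {a b : H} (ha : ‖a‖ = 1) (hb : ‖b‖ = 1)
    (hab : ⟪a, b⟫ = 0) (φ : ℝ) :
    ((ℝ ∙ (Real.cos φ • a + Real.sin φ • b))ᗮ.reflection : H →L[ℝ] H) ∘L (ℝ ∙ a)ᗮ.reflection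
      = planeRotation a b (-(2 * φ)) := by
  have hba : ⟪b, a⟫ = 0 := by rw [real_inner_comm]; exact hab
  have hn : ‖Real.cos φ • a + Real.sin φ • b‖ = 1 := by
    rw [← sq_eq_sq₀ (norm_nonneg _) zero_le_one, one_pow, ← real_inner_self_eq_norm_sq]
    simp only [inner_add_left, inner_add_right, real_inner_smul_left, real_inner_smul_right,
      real_inner_self_eq_norm_sq a, real_inner_self_eq_norm_sq b, ha, hb, hab, hba]
    linear_combination Real.cos_sq_add_sin_sq φ
  ext x
  simp only [coe_comp, Function.comp_apply, ContinuousLinearEquiv.coe_coe,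
    LinearIsometryEquiv.coe_toContinuousLinearEquiv, reflection_orthogonal_singleton_apply, hn, ha]
  simp only [planeRotation, inner_add_left, inner_sub_right, real_inner_smul_left,
    real_inner_smul_right, real_inner_self_eq_norm_sq, ha, hba, add_apply, one_apply_eq_self,
    smul_apply, smulRight_apply, innerSL_apply_apply, wedge_apply, Real.cos_neg, Real.sin_neg,
    Real.cos_two_mul, Real.sin_two_mul]
  match_scalars
  · ring
  · ring
  · linear_combination (-2 * ⟪b, x⟫) * Real.sin_sq_add_cos_sq φ

lemma exists_eq_cos_smul_add_sin_smul {u v : H} (hu : ‖u‖ = 1) (hv : ‖v‖ = 1)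
    (h : u ∉ ℝ ∙ v) :
    ∃ (b : H) (φ : ℝ), ‖b‖ = 1 ∧ ⟪v, b⟫ = 0 ∧ u = Real.cos φ • v + Real.sin φ • b := by
  set c := ⟪v, u⟫
  set w := u - c • v
  have hw : w ≠ 0 := fun hw => h (mem_span_singleton.2 ⟨c, (sub_eq_zero.1 hw).symm⟩)
  have hvw : ⟪v, w⟫ = 0 := by
    simp [w, inner_sub_right, real_inner_smul_right, hv, c]
  have hw2 : ‖w‖ ^ 2 = 1 - c ^ 2 := by
    rw [← real_inner_self_eq_norm_sq]
    simp only [w, inner_sub_left, inner_sub_right, real_inner_smul_left, real_inner_smul_right,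
      real_inner_self_eq_norm_sq u, real_inner_self_eq_norm_sq v, hu, hv, real_inner_comm u v, c]
    ring
  have hc : |c| ≤ 1 := by simpa [hu, hv] using abs_real_inner_le_norm v u
  refine ⟨‖w‖⁻¹ • w, Real.arccos c, norm_smul_inv_norm hw, by
    rw [real_inner_smul_right, hvw, mul_zero], ?_⟩
  rw [Real.cos_arccos (neg_le_of_abs_le hc) (le_of_abs_le hc), Real.sin_arccos, ← hw2,
    Real.sqrt_sq (norm_nonneg w), smul_smul, mul_inv_cancel₀ (norm_ne_zero_iff.2 hw), one_smul]
  exact (add_sub_cancel (c • v) u).symm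

-- Switching the controls off outside `[0, T]` is what makes such solutions concatenable.
def SteersTo (Q : H →L[ℝ] H) (T : ℝ) : Prop :=
  ∃ (α β : ℝ → H) (R : ℝ → H →L[ℝ] H), Continuous α ∧ Continuous β ∧
    (∀ t, HasDerivAt R (wedge (α t) (β t) ∘L R t) t) ∧
    (∀ t ≤ 0, R t = 1 ∧ α t = 0 ∧ β t = 0) ∧
    (∀ t ≥ T, R t = Q ∧ α t = 0 ∧ β t = 0)

lemma steersTo_one (T : ℝ) : SteersTo (1 : H →L[ℝ] H) T :=
  ⟨0, 0, fun _ => 1, continuous_const, continuous_const,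
    fun t => by simpa using hasDerivAt_const t (1 : H →L[ℝ] H),
    fun _ _ => ⟨rfl, rfl, rfl⟩, fun _ _ => ⟨rfl, rfl, rfl⟩⟩

lemma SteersTo.comp {Q₁ Q₂ : H →L[ℝ] H} {T₁ T₂ : ℝ} (hT₁ : 0 ≤ T₁) (hT₂ : 0 ≤ T₂)
    (h₂ : SteersTo Q₂ T₂) (h₁ : SteersTo Q₁ T₁) : SteersTo (Q₂ ∘L Q₁) (T₁ + T₂) := by
  obtain ⟨α₁, β₁, R₁, hα₁, hβ₁, hR₁, start₁, stop₁⟩ := h₁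
  obtain ⟨α₂, β₂, R₂, hα₂, hβ₂, hR₂, start₂, stop₂⟩ := h₂
  refine ⟨fun t => α₁ t + α₂ (t - T₁), fun t => β₁ t + β₂ (t - T₁),
    fun t => R₂ (t - T₁) ∘L R₁ t, hα₁.add (hα₂.comp (continuous_sub_right T₁)),
    hβ₁.add (hβ₂.comp (continuous_sub_right T₁)), fun t => ?_, fun t ht => ?_, fun t ht => ?_⟩
  · have hR := ((hR₂ (t - T₁)).comp_sub_const t T₁).clm_comp (hR₁ t)
    rcases le_total t T₁ with ht | ht
    · obtain ⟨hR₂1, hα₂0, hβ₂0⟩ := start₂ (t - T₁) (by linarith)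
      simpa [hR₂1, hα₂0, hβ₂0, one_def] using hR
    · obtain ⟨hR₁Q, hα₁0, hβ₁0⟩ := stop₁ t ht
      simpa [hR₁Q, hα₁0, hβ₁0, comp_assoc] using hR
  · obtain ⟨hR₁1, hα₁0, hβ₁0⟩ := start₁ t ht
    obtain ⟨hR₂1, hα₂0, hβ₂0⟩ := start₂ (t - T₁) (by linarith)
    simp [hR₁1, hα₁0, hβ₁0, hR₂1, hα₂0, hβ₂0, one_def]
  · obtain ⟨hR₁Q, hα₁0, hβ₁0⟩ := stop₁ t (by linarith)
    obtain ⟨hR₂Q, hα₂0, hβ₂0⟩ := stop₂ (t - T₁) (by linarith)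
    simp [hR₁Q, hα₁0, hβ₁0, hR₂Q, hα₂0, hβ₂0]

open Real in
/-- The angle runs along `θ * smoothTransition t`; its speed `θ s'` is split as
`(θ √s') * √s'` between the two controls, so that both vanish outside `[0, 1]`. -/
lemma steersTo_planeRotation {a b : H} (ha : ‖a‖ = 1) (hb : ‖b‖ = 1) (hab : ⟪a, b⟫ = 0)
    (θ : ℝ) : SteersTo (planeRotation a b θ) 1 := by
  set σ := fun t => √(deriv smoothTransition t)
  have hs : ∀ t, HasDerivAt smoothTransition (deriv smoothTransition t) t := fun t =>
    ((smoothTransition.contDiff (n := 1)).differentiable one_ne_zero t).hasDerivAt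
  have hσ : Continuous σ :=
    ((smoothTransition.contDiff (n := 1)).continuous_deriv le_rfl).sqrt
  have hσσ : ∀ t, σ t * σ t = deriv smoothTransition t := fun t =>
    mul_self_sqrt smoothTransition.monotone.deriv_nonneg
  have hσ0 : ∀ t, t ≤ 0 ∨ 1 ≤ t → σ t = 0 := fun t ht => by
    simp [σ, deriv_smoothTransition_eq_zero ht]
  refine ⟨fun t => (θ * σ t) • a, fun t => σ t • b,
    fun t => planeRotation a b (θ * smoothTransition t),
    (continuous_const.mul hσ).smul continuous_const, hσ.smul continuous_const,
    fun t => ?_, fun t ht => ?_, fun t ht => ?_⟩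
  · rw [wedge_smul_smul, mul_assoc, hσσ, smul_comp]
    exact (hasDerivAt_planeRotation ha hb hab _).scomp t ((hs t).const_mul θ)
  · simp [smoothTransition.zero_of_nonpos ht, hσ0 t (Or.inl ht)]
  · simp [smoothTransition.one_of_one_le ht, hσ0 t (Or.inr ht)]

variable (H) in
def steerable : Submonoid (H →L[ℝ] H) where
  carrier := {Q | ∃ T > 0, SteersTo Q T}
  one_mem' := ⟨1, one_pos, steersTo_one 1⟩
  mul_mem' := fun ⟨T₂, hT₂, h₂⟩ ⟨T₁, hT₁, h₁⟩ =>
    ⟨T₁ + T₂, add_pos hT₁ hT₂, h₂.comp hT₁.le hT₂.le h₁⟩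

lemma reflection_comp_reflection_mem_steerable_of_norm_eq_one {u v : H} (hu : ‖u‖ = 1)
    (hv : ‖v‖ = 1) :
    ((ℝ ∙ u)ᗮ.reflection : H →L[ℝ] H) ∘L (ℝ ∙ v)ᗮ.reflection ∈ steerable H := by
  by_cases h : u ∈ ℝ ∙ v
  · obtain ⟨c, rfl⟩ := mem_span_singleton.1 h
    have hc : c ≠ 0 := by rintro rfl; simp at hu
    simp only [span_singleton_smul_eq (IsUnit.mk0 c hc)]
    convert (steerable H).one_mem
    ext x
    simp [reflection_reflection]
  · obtain ⟨b, φ, hb, hvb, rfl⟩ := exists_eq_cos_smul_add_sin_smul hu hv h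
    rw [reflection_comp_reflection_eq_planeRotation hv hb hvb]
    exact ⟨1, one_pos, steersTo_planeRotation hv hb hvb _⟩

lemma reflection_comp_reflection_mem_steerable {u v : H} (hu : u ≠ 0) (hv : v ≠ 0) :
    ((ℝ ∙ u)ᗮ.reflection : H →L[ℝ] H) ∘L (ℝ ∙ v)ᗮ.reflection ∈ steerable H := by
  have hu₁ : ‖‖u‖⁻¹ • u‖ = 1 := norm_smul_inv_norm hu
  have hv₁ : ‖‖v‖⁻¹ • v‖ = 1 := norm_smul_inv_norm hv
  simpa only [span_singleton_smul_eq (inv_ne_zero (norm_ne_zero_iff.2 hu)).isUnit,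
    span_singleton_smul_eq (inv_ne_zero (norm_ne_zero_iff.2 hv)).isUnit] using
    reflection_comp_reflection_mem_steerable_of_norm_eq_one hu₁ hv₁

lemma mem_steerable {Q : H →L[ℝ] H} (hQ : ∀ x, ‖Q x‖ = ‖x‖) (V : Submodule ℝ H)
    [FiniteDimensional ℝ V] (hfix : ∀ v ∈ Vᗮ, Q v = v) (hmaps : ∀ v ∈ V, Q v ∈ V)
    (hdet : LinearMap.det ((Q : H →ₗ[ℝ] H).restrict hmaps) = 1) : Q ∈ steerable H := by
  let φ : V ≃ₗᵢ[ℝ] V :=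
    LinearIsometry.toLinearIsometryEquiv ⟨(Q : H →ₗ[ℝ] H).restrict hmaps, fun x => hQ x⟩ rfl
  obtain ⟨l, hl, heven, hφ⟩ := φ.exists_even_reflections hdet
  have hQl : Q = (l.map fun v : V => ((ℝ ∙ (v : H))ᗮ.reflection : H →L[ℝ] H)).prod := by
    ext x
    obtain ⟨y, hy, z, hz, rfl⟩ := V.exists_add_mem_mem_orthogonal x
    rw [map_add, map_add, hfix z hz, prod_reflections_apply_of_mem_orthogonal l hz,
      prod_reflections_apply_coe l ⟨y, hy⟩, ← hφ]
    rfl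
  rw [hQl]
  exact (steerable H).list_prod_map_mem_of_mul_mem (p := (· ≠ 0))
    (fun u v hu hv => reflection_comp_reflection_mem_steerable (by simpa using hu)
      (by simpa using hv)) hl heven

end SkewControl

open SkewControl

/-- A "finite-like" special orthogonal operator — one acting as the identity on the
orthogonal complement of a finite-dimensional invariant subspace `V`, with determinant 1
on `V` — is reached exactly at time `T` by the solution of an ODE `R' = K_t ∘ R`,
`R 0 = 1`, with a rank-2 skew-adjoint generator built from continuous curves `α, β`. -/
theorem stmt_2 {H : Type*} [NormedAddCommGroup H] [InnerProductSpace ℝ H] [CompleteSpace H]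
    (Q : H →L[ℝ] H)
    (hQ : (adjoint Q).comp Q = 1)
    (V : Submodule ℝ H) (hV : FiniteDimensional ℝ V)
    (hfix : ∀ v ∈ Vᗮ, Q v = v)
    (hmaps : ∀ v ∈ V, Q v ∈ V)
    (hdet : LinearMap.det ((Q : H →ₗ[ℝ] H).restrict hmaps) = 1) :
    ∃ (T : ℝ), 0 < T ∧
      ∃ (α β : ℝ → H) (R : ℝ → H →L[ℝ] H),
        Continuous α ∧ Continuous β ∧ R 0 = 1 ∧
        (∀ t : ℝ, HasDerivAt R
          ((((innerSL ℝ (β t)).smulRight (α t)) -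
            ((innerSL ℝ (α t)).smulRight (β t))).comp (R t)) t) ∧
        R T = Q := by
  obtain ⟨T, hT, α, β, R, hα, hβ, hR, hstart, hstop⟩ :=
    mem_steerable ((norm_map_iff_adjoint_comp_self Q).2 hQ) V hfix hmaps hdet
  exact ⟨T, hT, α, β, R, hα, hβ, (hstart 0 le_rfl).1, hR, (hstop T le_rfl).1⟩
end

section
/- Let H be an infinite-dimensional separable real Hilbert space with a Hilbert basis e : ℕ → H. Let K be a bounded skew-adjoint operator on H (K† = −K) with ∑' n, ‖K (e n)‖² < ∞. Then for every ε > 0 there exists a bounded skew-adjoint operator K' on H of finite rank (the range of K' is a finite-dimensional subspace) such that exp K' fixes every vector orthogonal to the range of K' and ∑' n, ‖(exp K' − exp K) (e n)‖² < ε². In particular, the finite-like orthogonal operators exp K' are dense, in the Hilbert–Schmidt norm, among the operators exp K with K skew-adjoint Hilbert–Schmidt. -/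
/-!
Take `K' = P K P`, where `P` is the orthogonal projection onto the span of finitely many basis
vectors. It is skew-adjoint of finite rank, and `(range K')ᗮ = ker K'† = ker K'`, on which
`exp K'` is the identity. Since `P K - K = -(K P - K)†` and taking adjoints preserves the
Hilbert–Schmidt norm, `P K P - K = (P K - K) P + (K P - K)` has Hilbert–Schmidt norm at most
`2 ‖K P - K‖_HS`, which is twice the square root of a tail of `∑ ‖K (e i)‖²`. Finally `exp` is
Lipschitz for the Hilbert–Schmidt norm on operator-norm balls: from
`A ^ (n + 1) - B ^ (n + 1) = A ^ n (A - B) + (A ^ n - B ^ n) B` one gets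
`‖exp A - exp B‖_HS ≤ exp M ‖A - B‖_HS` whenever `‖A‖, ‖B‖ ≤ M`.
-/

open ContinuousLinearMap
open scoped InnerProduct

namespace ContinuousLinearMap

variable {𝕜 H : Type*} [RCLike 𝕜] [NormedAddCommGroup H] [InnerProductSpace 𝕜 H] [CompleteSpace H]

theorem adjoint_conj_eq_neg {K P : H →L[𝕜] H} (hK : K† = -K) (hP : IsSelfAdjoint P) :
    (P ∘L K ∘L P)† = -(P ∘L K ∘L P) := by
  rw [adjoint_comp, adjoint_comp, hP.adjoint_eq, hK]
  ext v
  simp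

theorem apply_eq_zero_of_mem_orthogonal_range {K : H →L[𝕜] H} (hK : K† = -K) {v : H}
    (hv : v ∈ (LinearMap.range (K : H →ₗ[𝕜] H))ᗮ) : K v = 0 := by
  rw [orthogonal_range, hK] at hv
  simpa using hv

end ContinuousLinearMap

theorem NormedSpace.exp_apply_of_apply_eq_zero {𝕜 E : Type*} [RCLike 𝕜] [NormedAddCommGroup E]
    [NormedSpace 𝕜 E] [CompleteSpace E] {A : E →L[𝕜] E} {v : E} (hv : A v = 0) :
    exp A v = v := by
  refine ((exp_series_hasSum_exp' (𝕂 := 𝕜) A).mapL (apply 𝕜 E v)).unique ?_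
  convert hasSum_single 0 fun n hn => ?_
  · simp
  · obtain ⟨m, rfl⟩ := Nat.exists_eq_succ_of_ne_zero hn
    simp [pow_succ, hv]

namespace HilbertBasis

variable {ι 𝕜 H : Type*} [RCLike 𝕜] [NormedAddCommGroup H] [InnerProductSpace 𝕜 H]
  (e : HilbertBasis ι 𝕜 H)

theorem hasSum_norm_inner_sq (x : H) : HasSum (fun i => ‖inner 𝕜 (e i) x‖ ^ 2) (‖x‖ ^ 2) := by
  simpa [Real.rpow_two, e.repr_apply_apply] using lp.hasSum_norm (p := 2) (by norm_num) (e.repr x)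

theorem hasSum_norm_adjoint_apply_sq [CompleteSpace H] {T : H →L[𝕜] H} {c : ℝ}
    (hT : HasSum (fun i => ‖T (e i)‖ ^ 2) c) : HasSum (fun j => ‖(T†) (e j)‖ ^ 2) c := by
  have hrow (i : ι) : HasSum (fun j => ‖inner 𝕜 (e j) (T (e i))‖ ^ 2) (‖T (e i)‖ ^ 2) :=
    e.hasSum_norm_inner_sq _
  have hmatrix : HasSum (fun p : ι × ι => ‖inner 𝕜 (e p.2) (T (e p.1))‖ ^ 2) c := by
    have hs : Summable fun p : ι × ι => ‖inner 𝕜 (e p.2) (T (e p.1))‖ ^ 2 :=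
      (summable_prod_of_nonneg fun _ => sq_nonneg _).2
        ⟨fun i => (hrow i).summable, by simpa only [(hrow _).tsum_eq] using hT.summable⟩
    exact (hs.hasSum.prod_fiberwise hrow).unique hT ▸ hs.hasSum
  refine ((Equiv.prodComm ι ι).hasSum_iff.2 hmatrix).prod_fiberwise fun j => ?_
  convert e.hasSum_norm_inner_sq ((T†) (e j)) using 2 with i
  rw [adjoint_inner_right, ← inner_conj_symm, RCLike.norm_conj]
  rfl

/-- Unlike the Hilbert–Schmidt norm itself, its finite sections `‖e.evalOn s T‖` are continuous
in `T` for the operator norm, so bounds on them pass to sums of operator-norm convergent series. -/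
noncomputable def evalOn (s : Finset ι) : (H →L[𝕜] H) →L[𝕜] PiLp 2 (fun _ : s => H) :=
  (PiLp.continuousLinearEquiv 2 𝕜 _).symm.toContinuousLinearMap ∘L
    ContinuousLinearMap.pi fun i => ContinuousLinearMap.apply 𝕜 H (e i)

theorem norm_evalOn_sq (s : Finset ι) (T : H →L[𝕜] H) :
    ‖e.evalOn s T‖ ^ 2 = ∑ i ∈ s, ‖T (e i)‖ ^ 2 := by
  rw [PiLp.norm_sq_eq_of_L2]
  exact Finset.sum_coe_sort s fun i => ‖T (e i)‖ ^ 2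

/-- `T` is Hilbert–Schmidt with `‖T‖_HS ≤ c`. -/
def HSNormLE (T : H →L[𝕜] H) (c : ℝ) : Prop := ∀ s : Finset ι, ‖e.evalOn s T‖ ≤ c

variable {e} {T S : H →L[𝕜] H} {a b c : ℝ}

theorem HSNormLE.nonneg (h : e.HSNormLE T c) : 0 ≤ c :=
  (norm_nonneg _).trans (h ∅)

theorem hsNormLE_iff_forall_sum_le :
    e.HSNormLE T c ↔ 0 ≤ c ∧ ∀ s : Finset ι, ∑ i ∈ s, ‖T (e i)‖ ^ 2 ≤ c ^ 2 := by
  refine ⟨fun h => ⟨h.nonneg, fun s => ?_⟩, fun ⟨hc, h⟩ s => ?_⟩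
  · rw [← norm_evalOn_sq]
    exact pow_le_pow_left₀ (norm_nonneg _) (h s) 2
  · exact (pow_le_pow_iff_left₀ (norm_nonneg _) hc two_ne_zero).1 (e.norm_evalOn_sq s T ▸ h s)

theorem HSNormLE.summable (h : e.HSNormLE T c) : Summable fun i => ‖T (e i)‖ ^ 2 :=
  summable_of_sum_le (fun _ => sq_nonneg _) (hsNormLE_iff_forall_sum_le.1 h).2

theorem HSNormLE.tsum_le (h : e.HSNormLE T c) : ∑' i, ‖T (e i)‖ ^ 2 ≤ c ^ 2 :=
  h.summable.tsum_le_of_sum_le (hsNormLE_iff_forall_sum_le.1 h).2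

theorem hsNormLE_of_hasSum (hT : HasSum (fun i => ‖T (e i)‖ ^ 2) a) (hac : a ≤ c ^ 2)
    (hc : 0 ≤ c) : e.HSNormLE T c :=
  hsNormLE_iff_forall_sum_le.2
    ⟨hc, fun s => (sum_le_hasSum s (fun _ _ => sq_nonneg _) hT).trans hac⟩

theorem HSNormLE.mono (h : e.HSNormLE T a) (hab : a ≤ b) : e.HSNormLE T b :=
  fun s => (h s).trans hab

theorem HSNormLE.add (hT : e.HSNormLE T a) (hS : e.HSNormLE S b) :
    e.HSNormLE (T + S) (a + b) :=
  fun s => by simpa only [map_add] using (norm_add_le _ _).trans (add_le_add (hT s) (hS s))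

theorem HSNormLE.neg (h : e.HSNormLE T c) : e.HSNormLE (-T) c :=
  fun s => by simpa only [map_neg, norm_neg] using h s

theorem HSNormLE.smul (r : 𝕜) (h : e.HSNormLE T c) : e.HSNormLE (r • T) (‖r‖ * c) :=
  fun s => by
    rw [map_smul, norm_smul]
    exact mul_le_mul_of_nonneg_left (h s) (norm_nonneg r)

theorem HSNormLE.comp_left (L : H →L[𝕜] H) (h : e.HSNormLE T c) :
    e.HSNormLE (L ∘L T) (‖L‖ * c) := by
  obtain ⟨hc, h⟩ := hsNormLE_iff_forall_sum_le.1 h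
  refine hsNormLE_iff_forall_sum_le.2 ⟨by positivity, fun s => ?_⟩
  calc ∑ i ∈ s, ‖L (T (e i))‖ ^ 2 ≤ ∑ i ∈ s, ‖L‖ ^ 2 * ‖T (e i)‖ ^ 2 :=
        Finset.sum_le_sum fun i _ => by
          rw [← mul_pow]
          exact pow_le_pow_left₀ (norm_nonneg _) (L.le_opNorm _) 2
    _ ≤ (‖L‖ * c) ^ 2 := by
        rw [← Finset.mul_sum, mul_pow]
        exact mul_le_mul_of_nonneg_left (h s) (by positivity)

theorem _root_.HasSum.hsNormLE {β : Type*} {f : β → H →L[𝕜] H} {g : β → ℝ} (hf : HasSum f T)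
    (hg : HasSum g c) (h : ∀ n, e.HSNormLE (f n) (g n)) : e.HSNormLE T c :=
  fun s => (hf.mapL (e.evalOn s)).norm_le_of_bounded hg fun n => h n s

theorem hsNormLE_comp_sub_self {K P : H →L[𝕜] H} {s : Finset ι} {δ : ℝ}
    (hPs : ∀ i ∈ s, P (e i) = e i) (hPsc : ∀ i ∉ s, P (e i) = 0)
    (hK : ∀ t : Finset ι, Disjoint t s → ∑ i ∈ t, ‖K (e i)‖ ^ 2 ≤ δ ^ 2) (hδ : 0 ≤ δ) :
    e.HSNormLE (K ∘L P - K) δ := by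
  classical
  refine hsNormLE_iff_forall_sum_le.2 ⟨hδ, fun t => ?_⟩
  calc ∑ i ∈ t, ‖(K ∘L P - K) (e i)‖ ^ 2 = ∑ i ∈ t \ s, ‖(K ∘L P - K) (e i)‖ ^ 2 := by
        refine (Finset.sum_subset Finset.sdiff_subset fun i hit hi => ?_).symm
        simp [hPs i (by simpa [hit] using hi)]
    _ = ∑ i ∈ t \ s, ‖K (e i)‖ ^ 2 :=
        Finset.sum_congr rfl fun i hi => by simp [hPsc i (Finset.mem_sdiff.1 hi).2]
    _ ≤ δ ^ 2 := hK _ Finset.sdiff_disjoint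

section Complete

variable [CompleteSpace H]

theorem HSNormLE.adjoint (h : e.HSNormLE T c) : e.HSNormLE (T†) c :=
  hsNormLE_of_hasSum (e.hasSum_norm_adjoint_apply_sq h.summable.hasSum) h.tsum_le h.nonneg

theorem HSNormLE.comp_right (R : H →L[𝕜] H) (h : e.HSNormLE T c) :
    e.HSNormLE (T ∘L R) (c * ‖R‖) := by
  have h' := (h.adjoint.comp_left (R†)).adjoint
  rwa [adjoint_comp, adjoint_adjoint, adjoint_adjoint, LinearIsometryEquiv.norm_map,
    mul_comm] at h'

theorem HSNormLE.pow_succ_sub_pow_succ {A B : H →L[𝕜] H} {M δ : ℝ} (hA : ‖A‖ ≤ M)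
    (hB : ‖B‖ ≤ M) (h : e.HSNormLE (A - B) δ) (n : ℕ) :
    e.HSNormLE (A ^ (n + 1) - B ^ (n + 1)) ((n + 1) * M ^ n * δ) := by
  have hM : 0 ≤ M := (norm_nonneg _).trans hA
  have hδ : 0 ≤ δ := h.nonneg
  induction n with
  | zero => simpa using h
  | succ n ih =>
    have hsplit : A ^ (n + 2) - B ^ (n + 2) =
        (A ^ (n + 1)) ∘L (A - B) + (A ^ (n + 1) - B ^ (n + 1)) ∘L B := by
      simp only [← mul_def, pow_succ _ (n + 1)]
      noncomm_ring
    rw [hsplit]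
    refine ((h.comp_left _).add (ih.comp_right B)).mono ?_
    have hAn : ‖A ^ (n + 1)‖ ≤ M ^ (n + 1) :=
      (norm_pow_le' A n.succ_pos).trans (pow_le_pow_left₀ (norm_nonneg _) hA _)
    calc ‖A ^ (n + 1)‖ * δ + (n + 1) * M ^ n * δ * ‖B‖
        ≤ M ^ (n + 1) * δ + (n + 1) * M ^ n * δ * M := by gcongr
      _ = (↑(n + 1) + 1) * M ^ (n + 1) * δ := by push_cast; ring

theorem HSNormLE.exp_sub_exp {A B : H →L[𝕜] H} {M δ : ℝ} (hA : ‖A‖ ≤ M) (hB : ‖B‖ ≤ M)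
    (h : e.HSNormLE (A - B) δ) :
    e.HSNormLE (NormedSpace.exp A - NormedSpace.exp B) (Real.exp M * δ) := by
  have hseries : HasSum (fun n : ℕ => ((n + 1).factorial⁻¹ : 𝕜) • (A ^ (n + 1) - B ^ (n + 1)))
      (NormedSpace.exp A - NormedSpace.exp B) := by
    have h := (NormedSpace.exp_series_hasSum_exp' (𝕂 := 𝕜) A).sub
      (NormedSpace.exp_series_hasSum_exp' (𝕂 := 𝕜) B)
    rw [← hasSum_nat_add_iff' 1] at h
    simpa [smul_sub] using h
  have hbound : HasSum (fun n : ℕ => M ^ n / n.factorial * δ) (Real.exp M * δ) :=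
    Real.exp_eq_exp_ℝ ▸ (NormedSpace.expSeries_div_hasSum_exp M).mul_right δ
  refine hseries.hsNormLE hbound fun n => ((h.pow_succ_sub_pow_succ hA hB n).smul _).mono ?_
  rw [norm_inv, RCLike.norm_natCast, Nat.factorial_succ]
  push_cast
  exact (by field_simp : _ = M ^ n / n.factorial * δ).le

theorem HSNormLE.conj_sub {K P : H →L[𝕜] H} {δ : ℝ} (hK : K† = -K) (hP : IsSelfAdjoint P)
    (hP₁ : ‖P‖ ≤ 1) (h : e.HSNormLE (K ∘L P - K) δ) :
    e.HSNormLE (P ∘L K ∘L P - K) (2 * δ) := by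
  have hsplit : P ∘L K ∘L P - K = (-(K ∘L P - K)†) ∘L P + (K ∘L P - K) := by
    rw [map_sub, adjoint_comp, hK, hP.adjoint_eq]
    ext v
    simp only [sub_apply, comp_apply, comp_neg, sub_neg_eq_add, neg_add_rev, neg_neg, add_comp,
      neg_comp, add_apply, neg_apply]
    abel
  rw [hsplit]
  refine ((h.adjoint.neg.comp_right P).add h).mono ?_
  nlinarith [h.nonneg]

variable (e) in
theorem exists_finiteDimensional_range_hsNormLE_sub {K : H →L[𝕜] H} (hK : K† = -K)
    (hHS : Summable fun i => ‖K (e i)‖ ^ 2) {δ : ℝ} (hδ : 0 < δ) :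
    ∃ K' : H →L[𝕜] H, K'† = -K' ∧ FiniteDimensional 𝕜 (LinearMap.range (K' : H →ₗ[𝕜] H)) ∧
      ‖K'‖ ≤ ‖K‖ ∧ e.HSNormLE (K' - K) δ := by
  obtain ⟨s, hs⟩ := hHS.vanishing (Iic_mem_nhds (pow_pos (half_pos hδ) 2))
  set U := Submodule.span 𝕜 (e '' s)
  have : FiniteDimensional 𝕜 U := FiniteDimensional.span_of_finite 𝕜 (s.finite_toSet.image e)
  set P := U.starProjection
  have hPs (i : ι) (hi : i ∈ s) : P (e i) = e i :=
    Submodule.starProjection_eq_self_iff.2 (Submodule.subset_span (Set.mem_image_of_mem e hi))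
  have hPsc (i : ι) (hi : i ∉ s) : P (e i) = 0 := by
    refine (U.starProjection_apply_eq_zero_iff).2 <|
      (Submodule.isOrtho_iff_le.2 (Submodule.span_le.2 ?_)).ge
        (Submodule.mem_span_singleton_self (e i))
    rintro _ ⟨j, hj, rfl⟩
    exact Submodule.mem_orthogonal_singleton_iff_inner_left.2
      (e.orthonormal.2 (ne_of_mem_of_not_mem hj hi))
  refine ⟨P ∘L K ∘L P, adjoint_conj_eq_neg hK (isSelfAdjoint_starProjection U),
    Submodule.finiteDimensional_of_le (S₂ := U) ?_, ?_, ?_⟩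
  · rintro _ ⟨v, rfl⟩
    exact U.starProjection_apply_mem _
  · calc ‖P ∘L K ∘L P‖ ≤ ‖P‖ * (‖K‖ * ‖P‖) :=
          (opNorm_comp_le _ _).trans
            (mul_le_mul_of_nonneg_left (opNorm_comp_le _ _) (norm_nonneg _))
      _ ≤ 1 * (‖K‖ * 1) := by gcongr <;> exact U.starProjection_norm_le
      _ = ‖K‖ := by ring
  · have h := (e.hsNormLE_comp_sub_self hPs hPsc hs (half_pos hδ).le).conj_sub hK
      (isSelfAdjoint_starProjection U) U.starProjection_norm_le
    rwa [mul_div_cancel₀ δ two_ne_zero] at h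

end Complete

end HilbertBasis

/-- Finite-like orthogonal operators are Hilbert–Schmidt dense among exponentials of
skew-adjoint Hilbert–Schmidt operators: for any skew-adjoint Hilbert–Schmidt `K` and
`ε > 0` there is a finite-rank skew-adjoint `K'` whose exponential fixes everything
orthogonal to its range and with `‖exp K' − exp K‖_HS < ε`. -/
theorem stmt_3 {H : Type*} [NormedAddCommGroup H] [InnerProductSpace ℝ H] [CompleteSpace H]
    (e : HilbertBasis ℕ ℝ H)
    (K : H →L[ℝ] H)
    (hK : adjoint K = -K)
    (hHS : Summable fun n => ‖K (e n)‖ ^ 2) :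
    ∀ ε > (0 : ℝ),
      ∃ K' : H →L[ℝ] H,
        adjoint K' = -K' ∧
        FiniteDimensional ℝ (LinearMap.range (K' : H →ₗ[ℝ] H)) ∧
        (∀ v : H, v ∈ (LinearMap.range (K' : H →ₗ[ℝ] H))ᗮ →
          NormedSpace.exp K' v = v) ∧
        Summable (fun n => ‖(NormedSpace.exp K' - NormedSpace.exp K) (e n)‖ ^ 2) ∧
        ∑' n, ‖(NormedSpace.exp K' - NormedSpace.exp K) (e n)‖ ^ 2 < ε ^ 2 := by
  intro ε hε
  have hexp : 0 < Real.exp ‖K‖ := Real.exp_pos _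
  obtain ⟨K', hK'adj, hK'fin, hK'norm, hK'K⟩ :=
    e.exists_finiteDimensional_range_hsNormLE_sub hK hHS (div_pos hε (mul_pos two_pos hexp))
  have hD := hK'K.exp_sub_exp hK'norm le_rfl
  refine ⟨K', hK'adj, hK'fin, fun v hv => NormedSpace.exp_apply_of_apply_eq_zero
    (apply_eq_zero_of_mem_orthogonal_range hK'adj hv), hD.summable, hD.tsum_le.trans_lt ?_⟩
  calc (Real.exp ‖K‖ * (ε / (2 * Real.exp ‖K‖))) ^ 2 = (ε / 2) ^ 2 := by field_simp
    _ < ε ^ 2 := by gcongr; linarith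
end

section
/- Let H be an infinite-dimensional separable real Hilbert space and let K be a compact skew-adjoint bounded operator on H (K† = −K) that is Hilbert–Schmidt with respect to some Hilbert basis e : ℕ → H, i.e. ∑' n, ‖K (e n)‖² < ∞. Then there exist sequences u, v : ℕ → H such that the combined family {u j} ∪ {v j} (j ∈ ℕ) is orthonormal, and a sequence λ : ℕ → ℝ of nonnegative reals with ∑' j, (λ j)² < ∞, such that for every f ∈ H, K f = ∑' j, λ j • (⟪u j, f⟫ • (v j) − ⟪v j, f⟫ • (u j)), the series converging in H. -/
/-!
For a closed `K`-invariant subspace `V`, put `c = ‖K|_V‖`. A maximizing sequence for `‖K x‖` on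
the unit sphere of `V` is an approximate eigenvector of `K² = -K†K` for the eigenvalue `-c²`, and
compactness of `K²` turns it into a genuine unit eigenvector `u`; then `v = K u / c` completes an
orthonormal pair with `K u = c v`, `K v = -c u`. If `c = 0`, any orthonormal pair of `V` will do;
one exists because `H` is infinite-dimensional.

Starting from `W₀ = 0`, apply this to `V = W_nᗮ`, which is `K`-invariant because `K` is skew, and
let `W_{n+1}` be `W_n` together with the new pair. The pairs are orthonormal, the rates
`λ_n = ‖K u_n‖` are square-summable by the Hilbert–Schmidt condition (Bessel's inequality against
the basis), and since `f` minus its projection onto `W_n` lies in `W_nᗮ`, where `K` has norm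
`λ_n`, the `n`-th partial sum of the series is within `λ_n ‖f‖` of `K f`.
-/

open ContinuousLinearMap Filter
open scoped RealInnerProductSpace Topology

theorem ContinuousLinearMap.exists_seq_norm_eq_one_tendsto_opNorm {E F : Type*}
    [NormedAddCommGroup E] [NormedSpace ℝ E] [Nontrivial E] [SeminormedAddCommGroup F]
    [NormedSpace ℝ F] (f : E →L[ℝ] F) :
    ∃ x : ℕ → E, (∀ n, ‖x n‖ = 1) ∧ Tendsto (fun n => ‖f (x n)‖) atTop (𝓝 ‖f‖) := by
  have hne : ((fun x => ‖f x‖) '' Metric.sphere 0 1).Nonempty :=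
    (NormedSpace.sphere_nonempty.2 zero_le_one).image _
  have hbdd : BddAbove ((fun x => ‖f x‖) '' Metric.sphere 0 1) := by
    refine ⟨‖f‖, ?_⟩
    rintro - ⟨x, hx, rfl⟩
    simpa [mem_sphere_zero_iff_norm.1 hx] using f.le_opNorm x
  obtain ⟨r, -, hr, hrS⟩ := exists_seq_tendsto_sSup hne hbdd
  choose x hx hfx using hrS
  refine ⟨x, fun n => mem_sphere_zero_iff_norm.1 (hx n), ?_⟩
  simpa only [hfx, f.sSup_sphere_eq_norm] using hr

theorem summable_mul_of_summable_sq {ι : Type*} {a b : ι → ℝ} (ha : Summable fun i => a i ^ 2)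
    (hb : Summable fun i => b i ^ 2) : Summable fun i => a i * b i := by
  refine Summable.of_norm_bounded ((ha.add hb).div_const 2) fun i => ?_
  have := two_mul_le_add_sq |a i| |b i|
  rw [sq_abs, sq_abs] at this
  rw [Real.norm_eq_abs, abs_mul]
  linarith

section

variable {H : Type*} [NormedAddCommGroup H] [InnerProductSpace ℝ H]

theorem norm_sub_le_norm_of_inner_eq_zero {f g : H} (h : ⟪g, f - g⟫ = 0) : ‖f - g‖ ≤ ‖f‖ := by
  have hpyth := norm_add_sq_eq_norm_sq_add_norm_sq_real h
  rw [add_sub_cancel, ← sq, ← sq, ← sq] at hpyth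
  refine (pow_le_pow_iff_left₀ (norm_nonneg _) (norm_nonneg _) two_ne_zero).1 ?_
  rw [hpyth]
  exact le_add_of_nonneg_left (sq_nonneg _)

theorem exists_norm_eq_one_mem_orthogonal (hinf : ¬ FiniteDimensional ℝ H) (W : Submodule ℝ H)
    [FiniteDimensional ℝ W] : ∃ x ∈ Wᗮ, ‖x‖ = 1 := by
  have hne : Wᗮ ≠ ⊥ := by
    rw [Ne, Submodule.orthogonal_eq_bot_iff]
    rintro rfl
    exact hinf (Module.Finite.equiv Submodule.topEquiv)
  obtain ⟨x, hx, hx0⟩ := Submodule.exists_mem_ne_zero_of_ne_bot hne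
  exact ⟨(‖x‖⁻¹ : ℝ) • x, Wᗮ.smul_mem _ hx, norm_smul_inv_norm hx0⟩

theorem exists_orthonormal_pair_mem_orthogonal (hinf : ¬ FiniteDimensional ℝ H)
    (W : Submodule ℝ H) [FiniteDimensional ℝ W] :
    ∃ a b : H, a ∈ Wᗮ ∧ b ∈ Wᗮ ∧ ‖a‖ = 1 ∧ ‖b‖ = 1 ∧ ⟪a, b⟫ = 0 := by
  obtain ⟨a, ha, ha1⟩ := exists_norm_eq_one_mem_orthogonal hinf W
  obtain ⟨b, hb, hb1⟩ := exists_norm_eq_one_mem_orthogonal hinf (W ⊔ ℝ ∙ a)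
  rw [← Submodule.inf_orthogonal] at hb
  exact ⟨a, b, ha, hb.1, ha1, hb1, Submodule.mem_orthogonal_singleton_iff_inner_right.1 hb.2⟩

theorem add_inner_smul_mem_sup_and_sub_mem_orthogonal {W : Submodule ℝ H} {f g u : H}
    (hg : g ∈ W) (hfg : f - g ∈ Wᗮ) (hu : u ∈ Wᗮ) (hu1 : ‖u‖ = 1) :
    g + ⟪u, f⟫ • u ∈ W ⊔ ℝ ∙ u ∧ f - (g + ⟪u, f⟫ • u) ∈ (W ⊔ ℝ ∙ u)ᗮ := by
  refine ⟨Submodule.add_mem_sup hg (Submodule.smul_mem _ _ (Submodule.mem_span_singleton_self u)),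
    ?_⟩
  rw [← Submodule.inf_orthogonal, sub_add_eq_sub_sub]
  refine Submodule.mem_inf.2 ⟨sub_mem hfg (Wᗮ.smul_mem _ hu), ?_⟩
  have hug : ⟪u, g⟫ = 0 := Submodule.inner_left_of_mem_orthogonal hg hu
  rw [Submodule.mem_orthogonal_singleton_iff_inner_right, inner_sub_right, inner_sub_right,
    inner_smul_right, real_inner_self_eq_norm_sq, hu1, hug]
  ring

theorem summable_norm_smul_inner_smul_sub {ι : Type*} {u v : ι → H} (hu : Orthonormal ℝ u)
    (hv : Orthonormal ℝ v) {lam : ι → ℝ} (hlam : Summable fun j => lam j ^ 2) (f : H) :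
    Summable fun j => ‖lam j • (⟪u j, f⟫ • v j - ⟪v j, f⟫ • u j)‖ := by
  have hBessel : ∀ {w : ι → H}, Orthonormal ℝ w → Summable fun j => ⟪w j, f⟫ ^ 2 := fun hw => by
    simpa only [Real.norm_eq_abs, sq_abs] using hw.inner_products_summable f
  refine Summable.of_nonneg_of_le (fun _ => norm_nonneg _) (fun j => ?_)
    ((summable_mul_of_summable_sq hlam (hBessel hu)).abs.add
      (summable_mul_of_summable_sq hlam (hBessel hv)).abs)
  calc ‖lam j • (⟪u j, f⟫ • v j - ⟪v j, f⟫ • u j)‖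
      ≤ |lam j| * (|⟪u j, f⟫| + |⟪v j, f⟫|) := by
        rw [norm_smul, Real.norm_eq_abs]
        refine mul_le_mul_of_nonneg_left ((norm_sub_le _ _).trans_eq ?_) (abs_nonneg _)
        rw [norm_smul, norm_smul, hu.1, hv.1, Real.norm_eq_abs, Real.norm_eq_abs, mul_one, mul_one]
    _ = |lam j * ⟪u j, f⟫| + |lam j * ⟪v j, f⟫| := by rw [abs_mul, abs_mul, mul_add]

theorem not_finiteDimensional_of_hilbertBasis {ι : Type*} [Infinite ι] (e : HilbertBasis ι ℝ H) :
    ¬ FiniteDimensional ℝ H := fun _ =>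
  have := e.orthonormal.linearIndependent.finite
  not_finite ι

theorem summable_norm_sq_apply_of_orthonormal [CompleteSpace H] {ι κ : Type*}
    (e : HilbertBasis κ ℝ H) {K : H →L[ℝ] H} (hHS : Summable fun n => ‖adjoint K (e n)‖ ^ 2)
    {w : ι → H} (hw : Orthonormal ℝ w) : Summable fun i => ‖K (w i)‖ ^ 2 := by
  have hParseval : ∀ i, HasSum (fun n => ⟪w i, adjoint K (e n)⟫ ^ 2) (‖K (w i)‖ ^ 2) := by
    intro i
    have h := e.hasSum_inner_mul_inner (K (w i)) (K (w i))
    rw [real_inner_self_eq_norm_sq] at h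
    have hterm : (fun n => ⟪w i, adjoint K (e n)⟫ ^ 2) =
        fun n => ⟪K (w i), e n⟫ * ⟪e n, K (w i)⟫ := by
      ext n
      rw [adjoint_inner_right, real_inner_comm (e n), sq]
    rwa [hterm]
  refine summable_of_sum_le (c := ∑' n, ‖adjoint K (e n)‖ ^ 2) (fun i => sq_nonneg _) fun s => ?_
  calc ∑ i ∈ s, ‖K (w i)‖ ^ 2 = ∑' n, ∑ i ∈ s, ⟪w i, adjoint K (e n)⟫ ^ 2 := by
        rw [Summable.tsum_finsetSum fun i _ => (hParseval i).summable]
        exact Finset.sum_congr rfl fun i _ => (hParseval i).tsum_eq.symm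
    _ ≤ ∑' n, ‖adjoint K (e n)‖ ^ 2 := by
        refine (summable_sum fun i _ => (hParseval i).summable).tsum_le_tsum (fun n => ?_) hHS
        simpa only [Real.norm_eq_abs, sq_abs] using hw.sum_inner_products_le (adjoint K (e n))

theorem norm_apply_le_of_mem (K : H →L[ℝ] H) {V : Submodule ℝ H} {x : H} (hx : x ∈ V) :
    ‖K x‖ ≤ ‖K ∘L V.subtypeL‖ * ‖x‖ :=
  (K ∘L V.subtypeL).le_opNorm ⟨x, hx⟩

structure IsTopRotationPair (K : H →L[ℝ] H) (V : Submodule ℝ H) (u v : H) : Prop where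
  mem_fst : u ∈ V
  mem_snd : v ∈ V
  norm_fst : ‖u‖ = 1
  norm_snd : ‖v‖ = 1
  inner_eq_zero : ⟪u, v⟫ = 0
  apply_fst : K u = ‖K ∘L V.subtypeL‖ • v
  apply_snd : K v = -‖K ∘L V.subtypeL‖ • u

section Skew

variable [CompleteSpace H] {K : H →L[ℝ] H}

theorem inner_apply_left_of_adjoint_eq_neg (hK : adjoint K = -K) (x y : H) :
    ⟪K x, y⟫ = -⟪x, K y⟫ := by
  rw [← adjoint_inner_right, hK, neg_apply, inner_neg_right]

theorem inner_apply_self_of_adjoint_eq_neg (hK : adjoint K = -K) (x : H) : ⟪x, K x⟫ = 0 := by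
  have h := inner_apply_left_of_adjoint_eq_neg hK x x
  rw [real_inner_comm] at h
  linarith

theorem apply_mem_orthogonal_of_adjoint_eq_neg (hK : adjoint K = -K) {W : Submodule ℝ H}
    (hWK : ∀ x ∈ W, K x ∈ W) {x : H} (hx : x ∈ Wᗮ) : K x ∈ Wᗮ := by
  intro w hw
  rw [real_inner_comm, inner_apply_left_of_adjoint_eq_neg hK,
    Submodule.inner_left_of_mem_orthogonal (hWK w hw) hx, neg_zero]

theorem norm_sq_apply_apply_add_le (hK : adjoint K = -K) {V : Submodule ℝ H}
    (hVK : ∀ x ∈ V, K x ∈ V) {x : H} (hx : x ∈ V) (hx1 : ‖x‖ = 1) :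
    ‖K (K x) + ‖K ∘L V.subtypeL‖ ^ 2 • x‖ ^ 2 ≤
      ‖K ∘L V.subtypeL‖ ^ 2 * (‖K ∘L V.subtypeL‖ ^ 2 - ‖K x‖ ^ 2) := by
  set c := ‖K ∘L V.subtypeL‖
  have hKK : ‖K (K x)‖ ≤ c * ‖K x‖ := norm_apply_le_of_mem K (hVK x hx)
  have hcross : ⟪K (K x), x⟫ = -‖K x‖ ^ 2 := by
    rw [inner_apply_left_of_adjoint_eq_neg hK, real_inner_self_eq_norm_sq]
  rw [norm_add_sq_real, real_inner_smul_right, hcross, norm_smul, hx1, Real.norm_eq_abs,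
    abs_of_nonneg (sq_nonneg c)]
  nlinarith [mul_self_le_mul_self (norm_nonneg _) hKK]

theorem exists_seq_tendsto_apply_apply_add_sq_smul (hK : adjoint K = -K) {V : Submodule ℝ H}
    [Nontrivial V] (hVK : ∀ x ∈ V, K x ∈ V) :
    ∃ x : ℕ → H, (∀ n, x n ∈ V) ∧ (∀ n, ‖x n‖ = 1) ∧
      Tendsto (fun n => K (K (x n)) + ‖K ∘L V.subtypeL‖ ^ 2 • x n) atTop (𝓝 0) := by
  set c := ‖K ∘L V.subtypeL‖
  obtain ⟨x, hx1, hxc⟩ := (K ∘L V.subtypeL).exists_seq_norm_eq_one_tendsto_opNorm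
  replace hxc : Tendsto (fun n => ‖K (x n)‖) atTop (𝓝 c) := hxc
  refine ⟨fun n => x n, fun n => (x n).2, hx1, ?_⟩
  rw [tendsto_zero_iff_norm_tendsto_zero]
  have hbound : Tendsto (fun n => √(c ^ 2 * (c ^ 2 - ‖K (x n)‖ ^ 2))) atTop (𝓝 0) := by
    have h := (((hxc.pow 2).const_sub (c ^ 2)).const_mul (c ^ 2)).sqrt
    rwa [sub_self, mul_zero, Real.sqrt_zero] at h
  refine squeeze_zero (fun n => norm_nonneg _) (fun n => ?_) hbound
  exact Real.le_sqrt_of_sq_le (norm_sq_apply_apply_add_le hK hVK (x n).2 (hx1 n))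

theorem exists_norm_eq_one_apply_apply_eq (hKc : IsCompactOperator K) (hK : adjoint K = -K)
    {V : Submodule ℝ H} (hVc : IsClosed (V : Set H)) (hVK : ∀ x ∈ V, K x ∈ V)
    (hpos : 0 < ‖K ∘L V.subtypeL‖) :
    ∃ u ∈ V, ‖u‖ = 1 ∧ K (K u) = -‖K ∘L V.subtypeL‖ ^ 2 • u := by
  set c := ‖K ∘L V.subtypeL‖
  have : Nontrivial V := by
    by_contra h
    rw [not_nontrivial_iff_subsingleton] at h
    simp [c] at hpos
  obtain ⟨x, hxV, hx1, hdefect⟩ := exists_seq_tendsto_apply_apply_add_sq_smul hK hVK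
  replace hdefect : Tendsto (fun n => K (K (x n)) + c ^ 2 • x n) atTop (𝓝 0) := hdefect
  have hKKc : IsCompactOperator (K ∘L K) := hKc.clm_comp K
  obtain ⟨y, -, φ, hφ, hy⟩ := (hKKc.isCompact_closure_image_closedBall 1).tendsto_subseq
    (x := fun n => K (K (x n))) fun n => subset_closure ⟨x n, by simp [hx1], rfl⟩
  have hc2 : c ^ 2 ≠ 0 := pow_ne_zero 2 hpos.ne'
  have hxφ : Tendsto (fun k => x (φ k)) atTop (𝓝 (-(c ^ 2)⁻¹ • y)) := by
    have h := ((hdefect.comp hφ.tendsto_atTop).sub hy).const_smul (c ^ 2)⁻¹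
    rw [zero_sub, smul_neg, ← neg_smul] at h
    refine h.congr fun k => ?_
    simp only [Function.comp_apply, add_sub_cancel_left, smul_smul, inv_mul_cancel₀ hc2, one_smul]
  refine ⟨_, hVc.mem_of_tendsto hxφ (Eventually.of_forall fun k => hxV (φ k)),
    tendsto_nhds_unique hxφ.norm (by simp only [hx1, tendsto_const_nhds]), ?_⟩
  have hKK : Tendsto (fun k => K (K (x (φ k)))) atTop (𝓝 (K (K (-(c ^ 2)⁻¹ • y)))) :=
    ((K ∘L K).continuous.tendsto _).comp hxφ
  rw [tendsto_nhds_unique hKK hy, smul_smul, neg_mul_neg, mul_inv_cancel₀ hc2, one_smul]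

theorem exists_isTopRotationPair (hKc : IsCompactOperator K) (hK : adjoint K = -K)
    {V : Submodule ℝ H} (hVc : IsClosed (V : Set H)) (hVK : ∀ x ∈ V, K x ∈ V)
    (hV : ∃ a b : H, a ∈ V ∧ b ∈ V ∧ ‖a‖ = 1 ∧ ‖b‖ = 1 ∧ ⟪a, b⟫ = 0) :
    ∃ u v, IsTopRotationPair K V u v := by
  obtain ⟨c, hc⟩ : ∃ c, ‖K ∘L V.subtypeL‖ = c := ⟨_, rfl⟩
  rcases (hc ▸ opNorm_nonneg _ : 0 ≤ c).eq_or_lt with rfl | hpos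
  · obtain ⟨a, b, ha, hb, ha1, hb1, hab⟩ := hV
    have hK0 : ∀ x ∈ V, K x = 0 := fun x hx =>
      norm_le_zero_iff.1 (by simpa [hc] using norm_apply_le_of_mem K hx)
    refine ⟨a, b, ha, hb, ha1, hb1, hab, ?_, ?_⟩
    · rw [hK0 a ha, hc, zero_smul]
    · rw [hK0 b hb, hc, neg_zero, zero_smul]
  · obtain ⟨u, hu, hu1, hKKu⟩ := exists_norm_eq_one_apply_apply_eq hKc hK hVc hVK (hc ▸ hpos)
    rw [hc] at hKKu
    have hKu : ‖K u‖ = c := by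
      refine (pow_left_inj₀ (norm_nonneg _) hpos.le two_ne_zero).1 ?_
      rw [← real_inner_self_eq_norm_sq, inner_apply_left_of_adjoint_eq_neg hK, hKKu,
        real_inner_smul_right, real_inner_self_eq_norm_sq, hu1]
      ring
    refine ⟨u, c⁻¹ • K u, hu, V.smul_mem _ (hVK u hu), hu1, ?_, ?_, ?_, ?_⟩
    · rw [norm_smul, hKu, norm_inv, Real.norm_of_nonneg hpos.le, inv_mul_cancel₀ hpos.ne']
    · rw [real_inner_smul_right, inner_apply_self_of_adjoint_eq_neg hK, mul_zero]
    · rw [hc, smul_smul, mul_inv_cancel₀ hpos.ne', one_smul]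
    · rw [hc, map_smul, hKKu, smul_smul]
      congr 1
      field_simp

end Skew

noncomputable def nextRotationPair (K : H →L[ℝ] H) (W : Submodule ℝ H) : H × H :=
  Classical.epsilon fun p : H × H => IsTopRotationPair K Wᗮ p.1 p.2

noncomputable def rotationSubspace (K : H →L[ℝ] H) : ℕ → Submodule ℝ H
  | 0 => ⊥
  | n + 1 => rotationSubspace K n ⊔ ℝ ∙ (nextRotationPair K (rotationSubspace K n)).1 ⊔
      ℝ ∙ (nextRotationPair K (rotationSubspace K n)).2

noncomputable def rotationU (K : H →L[ℝ] H) (n : ℕ) : H :=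
  (nextRotationPair K (rotationSubspace K n)).1

noncomputable def rotationV (K : H →L[ℝ] H) (n : ℕ) : H :=
  (nextRotationPair K (rotationSubspace K n)).2

noncomputable def rotationNorm (K : H →L[ℝ] H) (n : ℕ) : ℝ :=
  ‖K ∘L (rotationSubspace K n)ᗮ.subtypeL‖

noncomputable def rotationTerm (K : H →L[ℝ] H) (f : H) (j : ℕ) : H :=
  rotationNorm K j • (⟪rotationU K j, f⟫ • rotationV K j - ⟪rotationV K j, f⟫ • rotationU K j)

noncomputable def rotationPartialProj (K : H →L[ℝ] H) (f : H) (n : ℕ) : H :=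
  ∑ j ∈ Finset.range n, (⟪rotationU K j, f⟫ • rotationU K j + ⟪rotationV K j, f⟫ • rotationV K j)

section Rotation

variable (K : H →L[ℝ] H)

theorem rotationSubspace_succ (n : ℕ) :
    rotationSubspace K (n + 1) = rotationSubspace K n ⊔ ℝ ∙ rotationU K n ⊔ ℝ ∙ rotationV K n :=
  rfl

instance finiteDimensional_rotationSubspace (n : ℕ) :
    FiniteDimensional ℝ (rotationSubspace K n) := by
  induction n with
  | zero => exact finiteDimensional_bot ℝ H
  | succ n ih => rw [rotationSubspace_succ]; infer_instance

theorem rotationSubspace_mono : Monotone (rotationSubspace K) :=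
  monotone_nat_of_le_succ fun _ => le_sup_left.trans le_sup_left

theorem rotationU_mem_of_lt {m n : ℕ} (h : m < n) : rotationU K m ∈ rotationSubspace K n :=
  rotationSubspace_mono K h <|
    Submodule.mem_sup_left (Submodule.mem_sup_right (Submodule.mem_span_singleton_self _))

theorem rotationV_mem_of_lt {m n : ℕ} (h : m < n) : rotationV K m ∈ rotationSubspace K n :=
  rotationSubspace_mono K h <| Submodule.mem_sup_right (Submodule.mem_span_singleton_self _)

theorem rotationPartialProj_succ (f : H) (n : ℕ) :
    rotationPartialProj K f (n + 1) = rotationPartialProj K f n +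
      ⟪rotationU K n, f⟫ • rotationU K n + ⟪rotationV K n, f⟫ • rotationV K n := by
  simp only [rotationPartialProj, Finset.sum_range_succ, add_assoc]

variable [CompleteSpace H] {K}

theorem isTopRotationPair_nextRotationPair (hKc : IsCompactOperator K) (hK : adjoint K = -K)
    (hinf : ¬ FiniteDimensional ℝ H) {W : Submodule ℝ H} [FiniteDimensional ℝ W]
    (hWK : ∀ x ∈ W, K x ∈ W) :
    IsTopRotationPair K Wᗮ (nextRotationPair K W).1 (nextRotationPair K W).2 := by
  refine Classical.epsilon_spec (p := fun p : H × H => IsTopRotationPair K Wᗮ p.1 p.2) ?_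
  obtain ⟨u, v, h⟩ := exists_isTopRotationPair hKc hK W.isClosed_orthogonal
    (fun _ hx => apply_mem_orthogonal_of_adjoint_eq_neg hK hWK hx)
    (exists_orthonormal_pair_mem_orthogonal hinf W)
  exact ⟨(u, v), h⟩

theorem rotationSubspace_invariant (hKc : IsCompactOperator K) (hK : adjoint K = -K)
    (hinf : ¬ FiniteDimensional ℝ H) (n : ℕ) :
    ∀ x ∈ rotationSubspace K n, K x ∈ rotationSubspace K n := by
  induction n with
  | zero =>
    intro x hx
    rw [rotationSubspace, Submodule.mem_bot] at hx ⊢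
    rw [hx, map_zero]
  | succ n ih =>
    have hp : IsTopRotationPair K (rotationSubspace K n)ᗮ (rotationU K n) (rotationV K n) :=
      isTopRotationPair_nextRotationPair hKc hK hinf ih
    suffices rotationSubspace K (n + 1) ≤ (rotationSubspace K (n + 1)).comap (K : H →ₗ[ℝ] H) from
      fun x hx => this hx
    rw [rotationSubspace_succ]
    refine sup_le (sup_le (fun x hx => ?_) ?_) ?_
    · exact Submodule.mem_sup_left (Submodule.mem_sup_left (ih x hx))
    · rw [Submodule.span_singleton_le_iff_mem, Submodule.mem_comap]
      change K (rotationU K n) ∈ _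
      rw [hp.apply_fst]
      exact Submodule.smul_mem _ _ (Submodule.mem_sup_right (Submodule.mem_span_singleton_self _))
    · rw [Submodule.span_singleton_le_iff_mem, Submodule.mem_comap]
      change K (rotationV K n) ∈ _
      rw [hp.apply_snd]
      exact Submodule.smul_mem _ _
        (Submodule.mem_sup_left (Submodule.mem_sup_right (Submodule.mem_span_singleton_self _)))

theorem isTopRotationPair_rotation (hKc : IsCompactOperator K) (hK : adjoint K = -K)
    (hinf : ¬ FiniteDimensional ℝ H) (n : ℕ) :
    IsTopRotationPair K (rotationSubspace K n)ᗮ (rotationU K n) (rotationV K n) :=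
  isTopRotationPair_nextRotationPair hKc hK hinf (rotationSubspace_invariant hKc hK hinf n)

theorem orthonormal_rotation (hKc : IsCompactOperator K) (hK : adjoint K = -K)
    (hinf : ¬ FiniteDimensional ℝ H) : Orthonormal ℝ (Sum.elim (rotationU K) (rotationV K)) := by
  have hp := isTopRotationPair_rotation hKc hK hinf
  set b := Sum.elim (rotationU K) (rotationV K)
  let level : ℕ ⊕ ℕ → ℕ := Sum.elim id id
  have hmem : ∀ {i n}, level i < n → b i ∈ rotationSubspace K n := by
    rintro (m | m) n h
    exacts [rotationU_mem_of_lt K h, rotationV_mem_of_lt K h]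
  have horth : ∀ i, b i ∈ (rotationSubspace K (level i))ᗮ := by
    rintro (n | n)
    exacts [(hp n).mem_fst, (hp n).mem_snd]
  have hlt : ∀ {i j}, level i < level j → ⟪b i, b j⟫ = 0 := fun h =>
    Submodule.inner_right_of_mem_orthogonal (hmem h) (horth _)
  rw [orthonormal_iff_ite]
  intro i j
  rcases lt_trichotomy (level i) (level j) with h | h | h
  · rw [hlt h, if_neg fun hij => h.ne (congrArg level hij)]
  · rcases i with m | m <;> rcases j with n | n <;> simp only [level, Sum.elim_inl, Sum.elim_inr,
      id] at h <;> subst h <;>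
      simp [b, (hp m).norm_fst, (hp m).norm_snd, (hp m).inner_eq_zero,
        real_inner_comm (rotationU K m)]
  · rw [real_inner_comm, hlt h, if_neg fun hij => h.ne' (congrArg level hij)]

theorem rotationPartialProj_mem_and_sub_mem_orthogonal (hKc : IsCompactOperator K)
    (hK : adjoint K = -K) (hinf : ¬ FiniteDimensional ℝ H) (f : H) (n : ℕ) :
    rotationPartialProj K f n ∈ rotationSubspace K n ∧
      f - rotationPartialProj K f n ∈ (rotationSubspace K n)ᗮ := by
  induction n with
  | zero => simp [rotationPartialProj, rotationSubspace]
  | succ n ih =>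
    have hp := isTopRotationPair_rotation hKc hK hinf n
    have hu := add_inner_smul_mem_sup_and_sub_mem_orthogonal ih.1 ih.2 hp.mem_fst hp.norm_fst
    have hv : rotationV K n ∈ (rotationSubspace K n ⊔ ℝ ∙ rotationU K n)ᗮ := by
      rw [← Submodule.inf_orthogonal]
      exact ⟨hp.mem_snd, Submodule.mem_orthogonal_singleton_iff_inner_right.2 hp.inner_eq_zero⟩
    rw [rotationPartialProj_succ, rotationSubspace_succ]
    exact add_inner_smul_mem_sup_and_sub_mem_orthogonal hu.1 hu.2 hv hp.norm_snd

theorem apply_rotationPartialProj (hKc : IsCompactOperator K) (hK : adjoint K = -K)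
    (hinf : ¬ FiniteDimensional ℝ H) (f : H) (n : ℕ) :
    K (rotationPartialProj K f n) = ∑ j ∈ Finset.range n, rotationTerm K f j := by
  simp only [rotationPartialProj, map_sum, map_add, map_smul]
  refine Finset.sum_congr rfl fun j _ => ?_
  rw [(isTopRotationPair_rotation hKc hK hinf j).apply_fst,
    (isTopRotationPair_rotation hKc hK hinf j).apply_snd, rotationTerm, rotationNorm]
  module

theorem norm_apply_sub_sum_range_le (hKc : IsCompactOperator K) (hK : adjoint K = -K)
    (hinf : ¬ FiniteDimensional ℝ H) (f : H) (n : ℕ) :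
    ‖K f - ∑ j ∈ Finset.range n, rotationTerm K f j‖ ≤ rotationNorm K n * ‖f‖ := by
  obtain ⟨hP, hfP⟩ := rotationPartialProj_mem_and_sub_mem_orthogonal hKc hK hinf f n
  rw [← apply_rotationPartialProj hKc hK hinf, ← map_sub]
  calc ‖K (f - rotationPartialProj K f n)‖
      ≤ rotationNorm K n * ‖f - rotationPartialProj K f n‖ := norm_apply_le_of_mem K hfP
    _ ≤ rotationNorm K n * ‖f‖ := mul_le_mul_of_nonneg_left
        (norm_sub_le_norm_of_inner_eq_zero (Submodule.inner_right_of_mem_orthogonal hP hfP))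
        (opNorm_nonneg _)

theorem tendsto_sum_range_rotation (hKc : IsCompactOperator K) (hK : adjoint K = -K)
    (hinf : ¬ FiniteDimensional ℝ H) (hsq : Summable fun j => rotationNorm K j ^ 2) (f : H) :
    Tendsto (fun n => ∑ j ∈ Finset.range n, rotationTerm K f j) atTop (𝓝 (K f)) := by
  have hnorm : Tendsto (rotationNorm K) atTop (𝓝 0) := by
    have h := hsq.tendsto_atTop_zero.sqrt
    rw [Real.sqrt_zero] at h
    exact h.congr fun j => Real.sqrt_sq (opNorm_nonneg _)
  rw [tendsto_iff_norm_sub_tendsto_zero]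
  refine squeeze_zero (fun _ => norm_nonneg _) (fun n => ?_) (by simpa using hnorm.mul_const ‖f‖)
  rw [norm_sub_rev]
  exact norm_apply_sub_sum_range_le hKc hK hinf f n

theorem summable_rotationNorm_sq {ι : Type*} (e : HilbertBasis ι ℝ H) (hKc : IsCompactOperator K)
    (hK : adjoint K = -K) (hinf : ¬ FiniteDimensional ℝ H)
    (hHS : Summable fun n => ‖K (e n)‖ ^ 2) : Summable fun j => rotationNorm K j ^ 2 := by
  have hu : Orthonormal ℝ (rotationU K) := by
    simpa using (orthonormal_rotation hKc hK hinf).comp _ Sum.inl_injective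
  have hHS' : Summable fun n => ‖adjoint K (e n)‖ ^ 2 := by simpa only [hK, neg_apply, norm_neg]
  refine (summable_norm_sq_apply_of_orthonormal e hHS' hu).congr fun j => ?_
  have hp := isTopRotationPair_rotation hKc hK hinf j
  rw [hp.apply_fst, norm_smul, hp.norm_snd, mul_one, Real.norm_of_nonneg (opNorm_nonneg _)]
  rfl

end Rotation

end

/-- Spectral decomposition of a compact skew-adjoint Hilbert–Schmidt operator: it can be
written as a convergent series of rank-2 skew-adjoint blocks
`K f = ∑' j, λ j • (⟪u j, f⟫ • v j − ⟪v j, f⟫ • u j)` with `{u j} ∪ {v j}` orthonormal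
and `(λ j)` nonnegative square-summable. -/
theorem stmt_4 {H : Type*} [NormedAddCommGroup H] [InnerProductSpace ℝ H] [CompleteSpace H]
    (e : HilbertBasis ℕ ℝ H)
    (K : H →L[ℝ] H)
    (hKcompact : IsCompactOperator K)
    (hK : adjoint K = -K)
    (hHS : Summable fun n => ‖K (e n)‖ ^ 2) :
    ∃ (u v : ℕ → H) (lam : ℕ → ℝ),
      Orthonormal ℝ (Sum.elim u v) ∧
      (∀ j, 0 ≤ lam j) ∧
      Summable (fun j => lam j ^ 2) ∧
      ∀ f : H, HasSum (fun j => lam j • (⟪u j, f⟫ • v j - ⟪v j, f⟫ • u j)) (K f) := by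
  have hinf := not_finiteDimensional_of_hilbertBasis e
  have horth := orthonormal_rotation hKcompact hK hinf
  have hsq := summable_rotationNorm_sq e hKcompact hK hinf hHS
  refine ⟨rotationU K, rotationV K, rotationNorm K, horth, fun _ => opNorm_nonneg _, hsq,
    fun f => ?_⟩
  have hsummable := summable_norm_smul_inner_smul_sub
    (by simpa using horth.comp _ Sum.inl_injective) (by simpa using horth.comp _ Sum.inr_injective)
    hsq f
  rw [hasSum_iff_tendsto_nat_of_summable_norm hsummable]
  exact tendsto_sum_range_rotation hKcompact hK hinf hsq f
end

section
/- Let H be a separable real Hilbert space with a Hilbert basis e : ℕ → H and let B be any bounded operator on H. Then ∑' n, ‖(exp B − 1) (e n)‖² ≤ Real.exp (2 * ‖B‖) * ∑' n, ‖B (e n)‖². In particular, if B is Hilbert–Schmidt then so is exp B − 1, and exp is continuous at 0 with respect to the Hilbert–Schmidt norm. -/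
/-!
Writing `exp B - 1 = φ(B) * B` with `φ(B) = ∑ₖ Bᵏ / (k+1)!`, the bound `‖Bᵏ‖ ≤ ‖B‖ᵏ` gives
`‖φ(B)‖ ≤ exp ‖B‖`, hence `‖(exp B - 1) x‖ ≤ exp ‖B‖ * ‖B x‖` for every vector `x`.
Squaring and summing over the basis vectors gives the Hilbert–Schmidt estimate.
-/

open ContinuousLinearMap
open scoped ENNReal Nat

namespace NormedSpace

section Algebra

variable {𝕂 𝔸 : Type*} [RCLike 𝕂] [NormedRing 𝔸] [NormedAlgebra 𝕂 𝔸]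

theorem norm_inv_factorial_succ_smul_pow_le (a : 𝔸) (k : ℕ) :
    ‖((k + 1)! : 𝕂)⁻¹ • a ^ k‖ ≤ ‖(k ! : 𝕂)⁻¹ • a ^ k‖ := by
  simp only [norm_smul, norm_inv, RCLike.norm_natCast]
  gcongr
  exact k.le_succ

theorem summable_norm_inv_factorial_succ_smul_pow (a : 𝔸) :
    Summable fun k : ℕ => ‖((k + 1)! : 𝕂)⁻¹ • a ^ k‖ :=
  .of_nonneg_of_le (fun _ => norm_nonneg _) (norm_inv_factorial_succ_smul_pow_le a)
    (norm_expSeries_summable' a)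

theorem norm_tsum_inv_factorial_succ_smul_pow_le (a : 𝔸) (h_one : ‖(1 : 𝔸)‖ ≤ 1) :
    ‖∑' k : ℕ, ((k + 1)! : 𝕂)⁻¹ • a ^ k‖ ≤ Real.exp ‖a‖ := by
  have h_pow (k : ℕ) : ‖a ^ k‖ ≤ ‖a‖ ^ k := by
    rcases k.eq_zero_or_pos with rfl | hk
    · simpa using h_one
    · exact norm_pow_le' a hk
  have h_term (k : ℕ) : ‖((k + 1)! : 𝕂)⁻¹ • a ^ k‖ ≤ ‖a‖ ^ k / k ! := by
    refine (norm_inv_factorial_succ_smul_pow_le a k).trans ?_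
    rw [norm_smul, norm_inv, RCLike.norm_natCast, inv_mul_eq_div]
    gcongr
    exact h_pow k
  calc ‖∑' k : ℕ, ((k + 1)! : 𝕂)⁻¹ • a ^ k‖
      ≤ ∑' k : ℕ, ‖((k + 1)! : 𝕂)⁻¹ • a ^ k‖ :=
        norm_tsum_le_tsum_norm (summable_norm_inv_factorial_succ_smul_pow a)
    _ ≤ ∑' k : ℕ, ‖a‖ ^ k / k ! :=
        (summable_norm_inv_factorial_succ_smul_pow a).tsum_le_tsum h_term
          (Real.summable_pow_div_factorial ‖a‖)
    _ = Real.exp ‖a‖ := by rw [Real.exp_eq_exp_ℝ, exp_eq_tsum_div]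

variable [CompleteSpace 𝔸]

theorem exp_sub_one_eq_tsum_mul (a : 𝔸) :
    exp a - 1 = (∑' k : ℕ, ((k + 1)! : 𝕂)⁻¹ • a ^ k) * a := by
  rw [exp_eq_tsum 𝕂]
  beta_reduce
  rw [← (summable_norm_inv_factorial_succ_smul_pow a).of_norm.tsum_mul_right,
    (expSeries_summable' (𝕂 := 𝕂) a).tsum_eq_zero_add]
  simp only [Nat.factorial_zero, Nat.cast_one, inv_one, pow_zero, one_smul, add_sub_cancel_left,
    pow_succ, smul_mul_assoc]

end Algebra

section Operator

variable {𝕂 E : Type*} [RCLike 𝕂] [NormedAddCommGroup E] [NormedSpace 𝕂 E] [CompleteSpace E]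

theorem norm_exp_sub_one_apply_le (B : E →L[𝕂] E) (x : E) :
    ‖(exp B - 1) x‖ ≤ Real.exp ‖B‖ * ‖B x‖ := by
  rw [exp_sub_one_eq_tsum_mul (𝕂 := 𝕂)]
  refine (le_opNorm _ (B x)).trans ?_
  gcongr
  exact norm_tsum_inv_factorial_succ_smul_pow_le B norm_id_le

theorem norm_exp_sub_one_apply_sq_le (B : E →L[𝕂] E) (x : E) :
    ‖(exp B - 1) x‖ ^ 2 ≤ Real.exp (2 * ‖B‖) * ‖B x‖ ^ 2 := by
  rw [mul_comm 2, Real.exp_mul, Real.rpow_two, ← mul_pow]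
  gcongr
  exact norm_exp_sub_one_apply_le B x

theorem tsum_enorm_exp_sub_one_apply_sq_le {ι : Type*} (B : E →L[𝕂] E) (v : ι → E) :
    ∑' n, ‖(exp B - 1) (v n)‖ₑ ^ 2 ≤
      ENNReal.ofReal (Real.exp (2 * ‖B‖)) * ∑' n, ‖B (v n)‖ₑ ^ 2 := by
  rw [← ENNReal.tsum_mul_left]
  refine ENNReal.tsum_le_tsum fun n => ?_
  rw [← ofReal_norm, ← ofReal_norm, ← ENNReal.ofReal_pow (norm_nonneg _),
    ← ENNReal.ofReal_pow (norm_nonneg _), ← ENNReal.ofReal_mul (Real.exp_nonneg _)]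
  exact ENNReal.ofReal_le_ofReal (norm_exp_sub_one_apply_sq_le B (v n))

theorem summable_norm_exp_sub_one_apply_sq {ι : Type*} {B : E →L[𝕂] E} {v : ι → E}
    (h : Summable fun n => ‖B (v n)‖ ^ 2) :
    Summable fun n => ‖(exp B - 1) (v n)‖ ^ 2 :=
  .of_nonneg_of_le (fun _ => sq_nonneg _) (fun n => norm_exp_sub_one_apply_sq_le B (v n))
    (h.mul_left _)

end Operator

end NormedSpace

/-- Hilbert–Schmidt bound for the exponential: for any bounded operator `B`,
`∑' n, ‖(exp B − 1)(e n)‖² ≤ exp(2‖B‖) · ∑' n, ‖B (e n)‖²` (sums taken in `[0, ∞]` so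
that divergent sums are `∞`); in particular, if `B` is Hilbert–Schmidt then so is
`exp B − 1`. -/
theorem stmt_5 {H : Type*} [NormedAddCommGroup H] [InnerProductSpace ℝ H] [CompleteSpace H]
    (e : HilbertBasis ℕ ℝ H)
    (B : H →L[ℝ] H) :
    (∑' n, (‖(NormedSpace.exp B - 1) (e n)‖₊ : ℝ≥0∞) ^ 2
        ≤ ENNReal.ofReal (Real.exp (2 * ‖B‖)) * ∑' n, (‖B (e n)‖₊ : ℝ≥0∞) ^ 2) ∧
      ((Summable fun n => ‖B (e n)‖ ^ 2) →
        Summable fun n => ‖(NormedSpace.exp B - 1) (e n)‖ ^ 2) :=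
  ⟨NormedSpace.tsum_enorm_exp_sub_one_apply_sq_le B e,
    NormedSpace.summable_norm_exp_sub_one_apply_sq⟩
end

section
/- Let H be a separable real Hilbert space. Let A be a bounded self-adjoint operator on H with ⟪f, A f⟫ ≥ 0 for all f, and suppose there is a Hilbert basis ψ : ℕ → H and a nonnegative antitone sequence λ : ℕ → ℝ with ∑' i, λ i < ∞ such that A (ψ i) = λ i • ψ i for all i. Then for every n and every orthonormal family f : Fin n → H, ∑ i : Fin n, ⟪f i, A (f i)⟫ ≤ ∑ i in Finset.range n, λ i. -/
open ContinuousLinearMap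
open scoped RealInnerProductSpace

set_option maxHeartbeats 1000000 in
/-- Poincaré separation / Ky Fan bound: for a positive semidefinite self-adjoint `A`
with eigenbasis `ψ` and decreasing summable eigenvalues `λ`, every orthonormal family
`f : Fin n → H` satisfies `∑ i, ⟪f i, A (f i)⟫ ≤ ∑_{i < n} λ i`. -/
theorem stmt_9 {H : Type*} [NormedAddCommGroup H] [InnerProductSpace ℝ H] [CompleteSpace H]
    (A : H →L[ℝ] H)
    (hA : adjoint A = A)
    (hApos : ∀ f : H, 0 ≤ ⟪f, A f⟫)
    (ψ : HilbertBasis ℕ ℝ H)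
    (lam : ℕ → ℝ)
    (hlam_nonneg : ∀ i, 0 ≤ lam i)
    (hlam_anti : Antitone lam)
    (hlam_summable : Summable lam)
    (heig : ∀ i, A (ψ i) = lam i • ψ i) :
    ∀ (n : ℕ) (f : Fin n → H), Orthonormal ℝ f →
      ∑ i : Fin n, ⟪f i, A (f i)⟫ ≤ ∑ i ∈ Finset.range n, lam i := by
  intro n f hf
  -- coefficients
  set c : ℕ → Fin n → ℝ := fun i j => ⟪ψ i, f j⟫ ^ 2 with hc
  have hc_nonneg : ∀ i j, 0 ≤ c i j := fun i j => sq_nonneg _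
  -- ⟪ψ i, A x⟫ = lam i * ⟪ψ i, x⟫
  have hAinner : ∀ (i : ℕ) (x : H), ⟪ψ i, A x⟫ = lam i * ⟪ψ i, x⟫ := by
    intro i x
    have := ContinuousLinearMap.adjoint_inner_left A x (ψ i)
    rw [hA] at this
    rw [← this, heig i, inner_smul_left]
    simp [RCLike.star_def]
  have key : ∀ (j : Fin n) (i : ℕ), ⟪f j, ψ i⟫ * ⟪ψ i, f j⟫ = c i j := by
    intro j i
    have h1 : ⟪f j, ψ i⟫ = ⟪ψ i, f j⟫ := real_inner_comm _ _
    simp only [hc, h1, sq]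
  -- key expansion: ⟪f j, A (f j)⟫ = ∑' i, lam i * c i j
  have hexp : ∀ j, ⟪f j, A (f j)⟫ = ∑' i, lam i * c i j := by
    intro j
    rw [← ψ.tsum_inner_mul_inner (f j) (A (f j))]
    congr 1
    ext i
    rw [hAinner, hc]
    have : ⟪f j, ψ i⟫ = ⟪ψ i, f j⟫ := real_inner_comm _ _
    rw [this]; ring
  -- summability of c in i
  have hcs : ∀ j, Summable fun i => c i j := fun j =>
    (ψ.summable_inner_mul_inner (f j) (f j)).congr (key j)
  -- Parseval: ∑' i, c i j = 1
  have hcsum : ∀ j, ∑' i, c i j = 1 := by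
    intro j
    rw [← tsum_congr (key j), ψ.tsum_inner_mul_inner,
      real_inner_self_eq_norm_sq, hf.1 j]; norm_num
  -- t i = ∑ j, c i j
  set t : ℕ → ℝ := fun i => ∑ j, c i j with ht
  have ht_nonneg : ∀ i, 0 ≤ t i := fun i => Finset.sum_nonneg fun j _ => hc_nonneg i j
  -- Bessel: t i ≤ 1
  have ht_le_one : ∀ i, t i ≤ 1 := by
    intro i
    have h := hf.sum_inner_products_le (s := Finset.univ) (ψ i)
    have : ∑ j : Fin n, ‖⟪f j, ψ i⟫‖ ^ 2 = t i := by
      apply Finset.sum_congr rfl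
      intro j _
      rw [Real.norm_eq_abs, sq_abs, real_inner_comm]
    rw [this] at h
    calc t i ≤ ‖ψ i‖ ^ 2 := h
      _ = 1 := by rw [ψ.orthonormal.1 i]; norm_num
  have ht_summable : Summable t := by
    exact summable_sum (s := Finset.univ) fun j _ => hcs j
  have ht_tsum : ∑' i, t i = n := by
    have h2 := Summable.tsum_finsetSum (s := (Finset.univ : Finset (Fin n)))
      (f := fun (j : Fin n) (i : ℕ) => c i j) (fun j _ => hcs j)
    calc ∑' i, t i = ∑ j : Fin n, ∑' i, c i j := h2
      _ = ∑ _j : Fin n, (1 : ℝ) := Finset.sum_congr rfl fun j _ => hcsum j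
      _ = n := by simp
  -- summability of lam i * t i
  have hlt_summable : Summable fun i => lam i * t i := by
    apply Summable.of_nonneg_of_le (fun i => mul_nonneg (hlam_nonneg i) (ht_nonneg i))
      (fun i => ?_) hlam_summable
    calc lam i * t i ≤ lam i * 1 := by
          exact mul_le_mul_of_nonneg_left (ht_le_one i) (hlam_nonneg i)
      _ = lam i := mul_one _
  -- rewrite the LHS
  have hcle : ∀ i j, c i j ≤ 1 := fun i j =>
    le_trans (Finset.single_le_sum (fun j _ => hc_nonneg i j) (Finset.mem_univ j)) (ht_le_one i)
  have hcsl : ∀ j, Summable fun i => lam i * c i j := fun j =>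
    Summable.of_nonneg_of_le (fun i => mul_nonneg (hlam_nonneg i) (hc_nonneg i j))
      (fun i => by nlinarith [hcle i j, hlam_nonneg i]) hlam_summable
  have hLHS : ∑ j : Fin n, ⟪f j, A (f j)⟫ = ∑' i, lam i * t i := by
    have h2 := Summable.tsum_finsetSum (s := (Finset.univ : Finset (Fin n)))
      (f := fun (j : Fin n) (i : ℕ) => lam i * c i j) (fun j _ => hcsl j)
    calc ∑ j : Fin n, ⟪f j, A (f j)⟫ = ∑ j : Fin n, ∑' i, lam i * c i j :=
          Finset.sum_congr rfl fun j _ => hexp j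
      _ = ∑' i, ∑ j : Fin n, lam i * c i j := h2.symm
      _ = ∑' i, lam i * t i := tsum_congr fun i => (Finset.mul_sum _ _ _).symm
  rw [hLHS]
  -- the comparison function
  set g : ℕ → ℝ := fun i => lam n * t i + (if i < n then lam i - lam n else 0) with hg
  have hg_summable : Summable g := by
    apply Summable.add (ht_summable.mul_left _)
    apply summable_of_finite_support
    apply Set.Finite.subset (Set.finite_Iio n)
    intro i hi
    simp only [Function.mem_support] at hi
    by_contra h
    simp only [Set.mem_Iio, not_lt] at h
    apply hi
    simp [Nat.not_lt.mpr h]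
  have hmono : ∀ i, lam i * t i ≤ g i := by
    intro i
    rw [hg]
    by_cases h : i < n
    · simp only [if_pos h]
      have h1 : lam n ≤ lam i := hlam_anti h.le
      have : (lam i - lam n) * t i ≤ (lam i - lam n) * 1 :=
        mul_le_mul_of_nonneg_left (ht_le_one i) (by linarith)
      nlinarith [ht_nonneg i]
    · simp only [if_neg h]
      have h1 : lam i ≤ lam n := hlam_anti (Nat.not_lt.mp h)
      have := mul_le_mul_of_nonneg_right h1 (ht_nonneg i)
      linarith
  calc ∑' i, lam i * t i ≤ ∑' i, g i := Summable.tsum_le_tsum hmono hlt_summable hg_summable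
    _ = lam n * ∑' i, t i + ∑' i, (if i < n then lam i - lam n else 0) := by
        rw [hg, Summable.tsum_add (ht_summable.mul_left _), tsum_mul_left]
        apply summable_of_finite_support
        apply Set.Finite.subset (Set.finite_Iio n)
        intro i hi
        simp only [Function.mem_support] at hi
        by_contra h
        simp only [Set.mem_Iio, not_lt] at h
        exact hi (by simp [Nat.not_lt.mpr h])
    _ = lam n * n + ∑ i ∈ Finset.range n, (lam i - lam n) := by
        rw [ht_tsum]
        congr 1
        rw [tsum_eq_sum (s := Finset.range n)]
        · apply Finset.sum_congr rfl
          intro i hi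
          rw [if_pos (Finset.mem_range.mp hi)]
        · intro i hi
          rw [if_neg (fun h => hi (Finset.mem_range.mpr h))]
    _ = ∑ i ∈ Finset.range n, lam i := by
        rw [Finset.sum_sub_distrib, Finset.sum_const, Finset.card_range, nsmul_eq_mul]
        ring
end

section
/- Let H be a real Hilbert space, let r be a natural number, let U : H →L[ℝ] EuclideanSpace ℝ (Fin r) be a bounded linear map, and let S be a skew-adjoint linear operator on EuclideanSpace ℝ (Fin r) (S† = −S). Define K := U† ∘ S ∘ U, a bounded skew-adjoint operator on H. Then: (i) the operator 1_H − (1/2) • K is invertible; (ii) the operator 1_r − (1/2) • ((U ∘ U†) ∘ S) on EuclideanSpace ℝ (Fin r) is invertible; and (iii) the Woodbury identity holds: (1_H − (1/2) • K)⁻¹ = 1_H + (1/2) • (U† ∘ S ∘ (1_r − (1/2) • ((U ∘ U†) ∘ S))⁻¹ ∘ U). -/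
/-!
Jacobson's lemma with an explicit inverse (the push-through identity
`A (1 - B A) = (1 - A B) A`) reduces everything to the invertibility of the `r × r` operator
`M = 1 - ½ (U U†) S`, with `A = ½ U† S`, `B = U`. In finite dimension it suffices that `M` be
injective: if `M x = 0` and `y = U† S x`, then `x = ½ U y`, so
`‖½ y‖² = ½ ⟪S x, U (½ y)⟫ = ½ ⟪S x, x⟫ = 0` by skew-adjointness, whence `x = 0`.
-/

open ContinuousLinearMap

namespace ContinuousLinearMap

section Woodbury

variable {R E F : Type*} [Ring R] [TopologicalSpace E] [AddCommGroup E] [Module R E]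
  [IsTopologicalAddGroup E] [TopologicalSpace F] [AddCommGroup F] [Module R F]
  [IsTopologicalAddGroup F] (A : F →L[R] E) (B : E →L[R] F)

theorem comp_one_sub_comp : A ∘L (1 - B ∘L A) = (1 - A ∘L B) ∘L A := by
  ext; simp

theorem isUnit_one_sub_comp_and_inverse_eq (h : IsUnit (1 - B ∘L A)) :
    IsUnit (1 - A ∘L B) ∧
      Ring.inverse (1 - A ∘L B) = 1 + A ∘L Ring.inverse (1 - B ∘L A) ∘L B := by
  set N := Ring.inverse (1 - B ∘L A)
  have hN : (1 - B ∘L A) ∘L N = 1 := Ring.mul_inverse_cancel _ h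
  have hN' : N ∘L (1 - B ∘L A) = 1 := Ring.inverse_mul_cancel _ h
  have right : (1 - A ∘L B) * (1 + A ∘L N ∘L B) = 1 := calc
    _ = (1 - A ∘L B) + ((1 - A ∘L B) ∘L A) ∘L N ∘L B := by rw [mul_add, mul_one]; rfl
    _ = 1 := by rw [← comp_one_sub_comp, comp_assoc, ← comp_assoc _ N, hN]; ext; simp
  have left : (1 + A ∘L N ∘L B) * (1 - A ∘L B) = 1 := calc
    _ = (1 - A ∘L B) + A ∘L N ∘L (B ∘L (1 - A ∘L B)) := by
      rw [add_mul, one_mul]; rfl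
    _ = 1 := by
      rw [comp_one_sub_comp B A, ← comp_assoc N, hN']; ext; simp
  let u : (E →L[R] E)ˣ := ⟨_, _, right, left⟩
  exact ⟨u.isUnit, Ring.inverse_unit u⟩

end Woodbury

theorem inner_apply_self_eq_zero_of_adjoint_eq_neg {E : Type*} [NormedAddCommGroup E]
    [InnerProductSpace ℝ E] [CompleteSpace E] {S : E →L[ℝ] E} (hS : adjoint S = -S) (x : E) :
    inner ℝ (S x) x = 0 := by
  have h := adjoint_inner_right S x x
  rw [hS, neg_apply, inner_neg_right, real_inner_comm] at h
  linarith

theorem isUnit_one_sub_smul_comp_adjoint_comp {E F : Type*} [NormedAddCommGroup E]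
    [InnerProductSpace ℝ E] [FiniteDimensional ℝ E] [NormedAddCommGroup F]
    [InnerProductSpace ℝ F] [CompleteSpace F] (U : F →L[ℝ] E) {S : E →L[ℝ] E}
    (hS : adjoint S = -S) (c : ℝ) : IsUnit (1 - c • (U ∘L adjoint U) ∘L S) := by
  rw [isUnit_iff_isUnit_toLinearMap, LinearMap.isUnit_iff_ker_eq_bot, LinearMap.ker_eq_bot']
  intro x hx
  set y := adjoint U (S x)
  have hx : x = U (c • y) := by
    simpa [y, sub_eq_zero] using hx
  have hy : c • y = 0 := by
    rw [← inner_self_eq_zero (𝕜 := ℝ)]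
    calc inner ℝ (c • y) (c • y) = c * inner ℝ y (c • y) := real_inner_smul_left _ _ _
      _ = c * inner ℝ (S x) x := by rw [adjoint_inner_left, ← hx]
      _ = 0 := by rw [inner_apply_self_eq_zero_of_adjoint_eq_neg hS, mul_zero]
  rw [hx, hy, map_zero]

end ContinuousLinearMap

/-- Woodbury identity for the low-rank Cayley step: with `K = U† ∘ S ∘ U` for a bounded
`U : H → ℝʳ` and skew-adjoint `S` on `ℝʳ`, both `1_H − ½K` and `1_r − ½(U U† S)` are
invertible and `(1_H − ½K)⁻¹ = 1_H + ½ U† S (1_r − ½ U U† S)⁻¹ U`. -/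
theorem stmt_16 {H : Type*} [NormedAddCommGroup H] [InnerProductSpace ℝ H] [CompleteSpace H]
    (r : ℕ)
    (U : H →L[ℝ] EuclideanSpace ℝ (Fin r))
    (S : EuclideanSpace ℝ (Fin r) →L[ℝ] EuclideanSpace ℝ (Fin r))
    (hS : adjoint S = -S) :
    IsUnit (1 - (1 / 2 : ℝ) • ((adjoint U).comp (S.comp U))) ∧
    IsUnit (1 - (1 / 2 : ℝ) • ((U.comp (adjoint U)).comp S)) ∧
    Ring.inverse (1 - (1 / 2 : ℝ) • ((adjoint U).comp (S.comp U)))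
      = 1 + (1 / 2 : ℝ) • ((adjoint U).comp (S.comp
          ((Ring.inverse (1 - (1 / 2 : ℝ) • ((U.comp (adjoint U)).comp S))).comp U))) := by
  have hM := isUnit_one_sub_smul_comp_adjoint_comp U hS (1 / 2)
  have hBA : U ∘L ((1 / 2 : ℝ) • (adjoint U ∘L S)) = (1 / 2 : ℝ) • ((U ∘L adjoint U) ∘L S) := by
    rw [comp_smul, comp_assoc]
  obtain ⟨hK, hinv⟩ :=
    isUnit_one_sub_comp_and_inverse_eq ((1 / 2 : ℝ) • (adjoint U ∘L S)) U (by rwa [hBA])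
  simp only [hBA, smul_comp, comp_assoc] at hK hinv
  exact ⟨hK, hM, hinv⟩
end

section
/- Let n ≥ 2 and let A be a real n × n matrix with Aᵀ * A = 1 and det A = 1 (i.e. A is special orthogonal). Then there exist a natural number M, angles θ : Fin M → ℝ, and vectors a, b : Fin M → (Fin n → ℝ) with, for each m, ‖a m‖ = 1, ‖b m‖ = 1, and ⟪a m, b m⟫ = 0, such that A equals the ordered product over m of the matrix exponentials Matrix.exp (θ m • (vecMulVec (a m) (b m) − vecMulVec (b m) (a m))). That is, every special orthogonal matrix is a finite product of planar (Givens) rotations, each the exponential of a rank-2 skew-symmetric matrix. -/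
/-!
For orthonormal `a, b` the generator `S = a bᵀ - b aᵀ` satisfies `S³ = -S`, so splitting the
exponential series into even and odd parts gives Rodrigues' formula
`exp (θ S) = 1 + sin θ • S + (1 - cos θ) • S²`: a rotation by `θ` in the plane of `a, b`, which
maps `cos θ • a + sin θ • b` to `a` and fixes the orthogonal complement of the plane.
Givens elimination then reduces `A ∈ SO(n)` to the identity: if `A` already fixes the basis
vectors `e_j`, `j ∈ s`, and `p ∉ s`, the unit vector `A e_p` is orthogonal to these `e_j`, and a
rotation in a plane through `e_p` that is also orthogonal to them moves `A e_p` back to `e_p`.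
Once at most one basis vector is not fixed, orthogonality and `det A = 1` force `A = 1`.
-/

open Matrix

section Rodrigues

variable {𝔸 : Type*} [Ring 𝔸] [Algebra ℝ 𝔸] {S : 𝔸}

theorem pow_two_mul_add_one_of_pow_three_eq_neg (hS : S ^ 3 = -S) (m : ℕ) :
    S ^ (2 * m + 1) = (-1 : ℝ) ^ m • S := by
  induction m with
  | zero => simp
  | succ m ih =>
    rw [show 2 * (m + 1) + 1 = 2 * m + 1 + 2 by ring, pow_add, ih, smul_mul_assoc,
      ← pow_succ' S 2, hS, pow_succ]
    module

theorem pow_two_mul_add_two_of_pow_three_eq_neg (hS : S ^ 3 = -S) (m : ℕ) :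
    S ^ (2 * m + 2) = (-1 : ℝ) ^ m • S ^ 2 := by
  rw [pow_succ, pow_two_mul_add_one_of_pow_three_eq_neg hS, smul_mul_assoc, ← sq]

variable [TopologicalSpace 𝔸] [IsTopologicalRing 𝔸] [ContinuousSMul ℝ 𝔸] [T2Space 𝔸]

theorem exp_smul_of_pow_three_eq_neg (hS : S ^ 3 = -S) (θ : ℝ) :
    NormedSpace.exp (θ • S) = 1 + Real.sin θ • S + (1 - Real.cos θ) • S ^ 2 := by
  -- the constant term `1 = -S² + (1 + S²)` does not follow the pattern of the other even terms
  have hcos : HasSum (fun m : ℕ => ((2 * m).factorial : ℝ)⁻¹ • (θ • S) ^ (2 * m))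
      (Real.cos θ • (-S ^ 2) + (1 + S ^ 2)) := by
    refine ((Real.hasSum_cos θ).smul_const (-S ^ 2)).add (hasSum_ite_eq 0 (1 + S ^ 2))
      |>.congr_fun fun m => ?_
    rcases m with _ | m
    · simp
    · rw [if_neg m.succ_ne_zero, smul_pow, mul_add, mul_one,
        pow_two_mul_add_two_of_pow_three_eq_neg hS]
      simp only [pow_succ, smul_smul]
      module
  have hsin : HasSum (fun m : ℕ => ((2 * m + 1).factorial : ℝ)⁻¹ • (θ • S) ^ (2 * m + 1))
      (Real.sin θ • S) := by
    refine (Real.hasSum_sin θ).smul_const S |>.congr_fun fun m => ?_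
    rw [smul_pow, pow_two_mul_add_one_of_pow_three_eq_neg hS]
    module
  rw [congrFun (NormedSpace.exp_eq_tsum ℝ) (θ • S),
    (HasSum.even_add_odd (f := fun k => (k.factorial : ℝ)⁻¹ • (θ • S) ^ k) hcos hsin).tsum_eq]
  module

end Rodrigues

namespace Matrix

variable {ι : Type*}

def wedge (a b : ι → ℝ) : Matrix ι ι ℝ := vecMulVec a b - vecMulVec b a

theorem transpose_wedge (a b : ι → ℝ) : (wedge a b)ᵀ = -wedge a b := by
  simp [wedge]

variable [Fintype ι]

theorem wedge_mulVec (a b x : ι → ℝ) : wedge a b *ᵥ x = (b ⬝ᵥ x) • a - (a ⬝ᵥ x) • b := by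
  simp [wedge, sub_mulVec, vecMulVec_mulVec]

theorem exists_eq_cos_smul_add_sin_smul {a a' u : ι → ℝ} (ha : a ⬝ᵥ a = 1)
    (ha' : a' ⬝ᵥ a' = 1) (haa' : a ⬝ᵥ a' = 0) (hu : u ⬝ᵥ u = 1) :
    ∃ (θ : ℝ) (b : ι → ℝ), b ⬝ᵥ b = 1 ∧ a ⬝ᵥ b = 0 ∧
      (∀ x, a ⬝ᵥ x = 0 → a' ⬝ᵥ x = 0 → u ⬝ᵥ x = 0 → b ⬝ᵥ x = 0) ∧
      u = Real.cos θ • a + Real.sin θ • b := by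
  set c := a ⬝ᵥ u
  set w := u - c • a with hw
  have haw : a ⬝ᵥ w = 0 := by simp [w, c, ha]
  have hww : w ⬝ᵥ w = 1 - c ^ 2 := by
    simp only [w, sub_dotProduct, dotProduct_sub, smul_dotProduct, dotProduct_smul, hu, ha,
      dotProduct_comm u a, smul_eq_mul]
    ring
  have hww_nonneg : 0 ≤ w ⬝ᵥ w := by simpa using dotProduct_star_self_nonneg w
  -- when `u = ±a` the plane is not determined by `a` and `u`, and `a'` supplies `b`
  obtain ⟨b, hb, hab, hbx, hwb⟩ : ∃ b : ι → ℝ, b ⬝ᵥ b = 1 ∧ a ⬝ᵥ b = 0 ∧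
      (∀ x, a ⬝ᵥ x = 0 → a' ⬝ᵥ x = 0 → u ⬝ᵥ x = 0 → b ⬝ᵥ x = 0) ∧
      w = √(w ⬝ᵥ w) • b := by
    by_cases hw0 : w = 0
    · exact ⟨a', ha', haa', fun x _ h _ => h, by simp [hw0]⟩
    set s := √(w ⬝ᵥ w)
    have hs : 0 < s := Real.sqrt_pos.mpr <|
      hww_nonneg.lt_of_ne (Ne.symm (dotProduct_self_eq_zero.not.mpr hw0))
    refine ⟨s⁻¹ • w, ?_, by simp [haw], fun x hax _ hux => by simp [w, hax, hux], ?_⟩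
    · have hss : s * s = w ⬝ᵥ w := Real.mul_self_sqrt hww_nonneg
      rw [smul_dotProduct, dotProduct_smul, smul_smul, smul_eq_mul, ← hss]
      field_simp
    · rw [smul_smul, mul_inv_cancel₀ hs.ne', one_smul]
  have hc : c ^ 2 ≤ 1 := by linarith
  refine ⟨Real.arccos c, b, hb, hab, hbx, ?_⟩
  rw [Real.cos_arccos (by nlinarith) (by nlinarith), Real.sin_arccos, ← hww, ← hwb, hw,
    add_sub_cancel]

section Orthonormal

variable {a b : ι → ℝ} (ha : a ⬝ᵥ a = 1) (hb : b ⬝ᵥ b = 1) (hab : a ⬝ᵥ b = 0)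

include ha hab in
theorem wedge_mulVec_left : wedge a b *ᵥ a = -b := by
  rw [wedge_mulVec, dotProduct_comm, hab, ha]
  simp

include hb hab in
theorem wedge_mulVec_right : wedge a b *ᵥ b = a := by
  rw [wedge_mulVec, hab, hb]
  simp

variable [DecidableEq ι]
include ha hb hab

theorem wedge_pow_three : wedge a b ^ 3 = -wedge a b := by
  refine ext_iff_mulVec.mpr fun x => ?_
  rw [pow_succ, pow_two, ← mulVec_mulVec, ← mulVec_mulVec, neg_mulVec, wedge_mulVec a b x]
  simp only [mulVec_sub, mulVec_smul, mulVec_neg, wedge_mulVec_left ha hab,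
    wedge_mulVec_right hb hab]
  module

theorem exp_smul_wedge_mulVec (θ : ℝ) (x : ι → ℝ) :
    NormedSpace.exp (θ • wedge a b) *ᵥ x =
      x + Real.sin θ • wedge a b *ᵥ x + (1 - Real.cos θ) • wedge a b *ᵥ (wedge a b *ᵥ x) := by
  rw [exp_smul_of_pow_three_eq_neg (wedge_pow_three ha hb hab), add_mulVec, add_mulVec,
    one_mulVec, smul_mulVec, smul_mulVec, sq, ← mulVec_mulVec]

theorem exp_smul_wedge_mulVec_of_dotProduct_eq_zero (θ : ℝ) {x : ι → ℝ} (hax : a ⬝ᵥ x = 0)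
    (hbx : b ⬝ᵥ x = 0) : NormedSpace.exp (θ • wedge a b) *ᵥ x = x := by
  have hx : wedge a b *ᵥ x = 0 := by simp [wedge_mulVec, hax, hbx]
  simp [exp_smul_wedge_mulVec ha hb hab, hx]

theorem exp_smul_wedge_mulVec_cos_smul_add_sin_smul (θ : ℝ) :
    NormedSpace.exp (θ • wedge a b) *ᵥ (Real.cos θ • a + Real.sin θ • b) = a := by
  simp only [exp_smul_wedge_mulVec ha hb hab, mulVec_add, mulVec_smul,
    wedge_mulVec_left ha hab, wedge_mulVec_right hb hab, mulVec_neg]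
  linear_combination (norm := module) Real.sin_sq_add_cos_sq θ • a

end Orthonormal

variable [DecidableEq ι]

theorem dotProduct_mulVec_mulVec {R : Type*} [CommSemiring R] {A : Matrix ι ι R}
    (hA : Aᵀ * A = 1) (x y : ι → R) : (A *ᵥ x) ⬝ᵥ (A *ᵥ y) = x ⬝ᵥ y := by
  rw [dotProduct_mulVec, ← mulVec_transpose, mulVec_mulVec, hA, one_mulVec]

theorem mem_specialOrthogonalGroup_iff_transpose_mul_self {R : Type*} [CommRing R]
    {A : Matrix ι ι R} : A ∈ specialOrthogonalGroup ι R ↔ Aᵀ * A = 1 ∧ A.det = 1 := by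
  rw [mem_specialOrthogonalGroup_iff, mem_orthogonalGroup_iff']

theorem exp_neg_mul_exp (X : Matrix ι ι ℝ) : NormedSpace.exp (-X) * NormedSpace.exp X = 1 := by
  rw [← exp_add_of_commute _ _ (Commute.neg_left (Commute.refl X)), neg_add_cancel,
    NormedSpace.exp_zero]

theorem det_exp_nonneg (X : Matrix ι ι ℝ) : 0 ≤ (NormedSpace.exp X).det := by
  have hX : X = (1 / 2 : ℝ) • X + (1 / 2 : ℝ) • X := by
    rw [← add_smul]
    norm_num
  rw [hX, exp_add_of_commute _ _ (Commute.refl _), det_mul]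
  exact mul_self_nonneg _

theorem exp_mem_specialOrthogonalGroup {X : Matrix ι ι ℝ} (hX : Xᵀ = -X) :
    NormedSpace.exp X ∈ specialOrthogonalGroup ι ℝ := by
  have horth : (NormedSpace.exp X)ᵀ * NormedSpace.exp X = 1 := by
    rw [← exp_transpose, hX, exp_neg_mul_exp]
  have hdet : (NormedSpace.exp X).det * (NormedSpace.exp X).det = 1 := by
    simpa using congrArg det horth
  exact mem_specialOrthogonalGroup_iff_transpose_mul_self.mpr
    ⟨horth, by nlinarith [det_exp_nonneg X]⟩

theorem eq_one_of_mulVec_single_eq_of_ne {A : Matrix ι ι ℝ}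
    (hA : A ∈ specialOrthogonalGroup ι ℝ) (i₀ : ι)
    (hfix : ∀ j ≠ i₀, A *ᵥ Pi.single j 1 = Pi.single j 1) : A = 1 := by
  obtain ⟨horth, hdet⟩ := mem_specialOrthogonalGroup_iff_transpose_mul_self.mp hA
  have hcol : ∀ i j, j ≠ i₀ → A i j = (Pi.single j 1 : ι → ℝ) i := fun i j hj => by
    rw [← hfix j hj, mulVec_single_one, col_apply]
  have hdiag : A.IsDiag := fun i j hij => by
    rcases eq_or_ne j i₀ with rfl | hj
    · have := dotProduct_mulVec_mulVec horth (Pi.single i 1) (Pi.single j 1)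
      rwa [hfix i hij, single_one_dotProduct, single_one_dotProduct, mulVec_single_one,
        Pi.single_eq_of_ne hij] at this
    · rw [hcol i j hj, Pi.single_eq_of_ne hij]
  have hi₀ : A i₀ i₀ = 1 := by
    rwa [← hdiag.diagonal_diag, det_diagonal,
      Finset.prod_eq_single i₀ (fun j _ hj => by simp [hcol j j hj]) (by simp)] at hdet
  rw [← hdiag.diagonal_diag, diagonal_eq_one]
  funext i
  rcases eq_or_ne i i₀ with rfl | hi
  · exact hi₀
  · simp [hcol i i hi]

variable (ι) in
def planeRotations : Set (Matrix ι ι ℝ) :=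
  {R | ∃ (θ : ℝ) (a b : ι → ℝ), a ⬝ᵥ a = 1 ∧ b ⬝ᵥ b = 1 ∧ a ⬝ᵥ b = 0 ∧
    NormedSpace.exp (θ • wedge a b) = R}

theorem exists_exp_smul_wedge_mul_mulVec_single_eq {A : Matrix ι ι ℝ} (hA : Aᵀ * A = 1)
    {s : Finset ι} (hs : ∀ j ∈ s, A *ᵥ Pi.single j 1 = Pi.single j 1) {p q : ι} (hp : p ∉ s)
    (hq : q ∉ s) (hpq : p ≠ q) :
    ∃ (θ : ℝ) (b : ι → ℝ), b ⬝ᵥ b = 1 ∧ Pi.single p 1 ⬝ᵥ b = 0 ∧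
      ∀ j ∈ insert p s, (NormedSpace.exp (θ • wedge (Pi.single p 1) b) * A) *ᵥ Pi.single j 1
        = Pi.single j 1 := by
  have hsingle (i j : ι) :
      (Pi.single i 1 : ι → ℝ) ⬝ᵥ Pi.single j 1 = if j = i then 1 else 0 := by
    simp [Pi.single_apply]
  have hp1 : (Pi.single p 1 : ι → ℝ) ⬝ᵥ Pi.single p 1 = 1 := by simp [hsingle]
  obtain ⟨θ, b, hb, hpb, hbx, hu⟩ := exists_eq_cos_smul_add_sin_smul (a := Pi.single p 1)
    (a' := Pi.single q 1) (u := A *ᵥ Pi.single p 1) hp1 (by simp [hsingle])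
    (by simp [hsingle, hpq.symm]) (by rw [dotProduct_mulVec_mulVec hA, hp1])
  refine ⟨θ, b, hb, hpb, fun j hj => ?_⟩
  rw [← mulVec_mulVec]
  rcases Finset.mem_insert.mp hj with rfl | hj
  · rw [hu, exp_smul_wedge_mulVec_cos_smul_add_sin_smul hp1 hb hpb]
  · have hjp : j ≠ p := fun h => hp (h ▸ hj)
    have hjq : j ≠ q := fun h => hq (h ▸ hj)
    have hpj : (Pi.single p 1 : ι → ℝ) ⬝ᵥ Pi.single j 1 = 0 := by simp [hsingle, hjp]
    rw [hs j hj, exp_smul_wedge_mulVec_of_dotProduct_eq_zero hp1 hb hpb θ hpj]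
    refine hbx _ hpj (by simp [hsingle, hjq]) ?_
    rw [← hs j hj, dotProduct_mulVec_mulVec hA, hpj]

theorem mem_closure_planeRotations_of_mulVec_single_eq {A : Matrix ι ι ℝ}
    (hA : A ∈ specialOrthogonalGroup ι ℝ) (s : Finset ι)
    (hs : ∀ j ∈ s, A *ᵥ Pi.single j 1 = Pi.single j 1) :
    A ∈ Submonoid.closure (planeRotations ι) := by
  induction h : sᶜ.card using Nat.strong_induction_on generalizing s A with
  | _ d ih =>
    rcases le_or_gt d 1 with hd | hd
    · suffices A = 1 from this ▸ one_mem _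
      rcases isEmpty_or_nonempty ι with _ | _
      · exact Subsingleton.elim _ _
      obtain ⟨i₀, hi₀⟩ := Finset.card_le_one_iff_subset_singleton.mp (h ▸ hd)
      refine eq_one_of_mulVec_single_eq_of_ne hA i₀ fun j hj => hs j ?_
      by_contra hjs
      exact hj (Finset.mem_singleton.mp (hi₀ (Finset.mem_compl.mpr hjs)))
    · obtain ⟨p, hp, q, hq, hpq⟩ := Finset.one_lt_card.mp (h ▸ hd)
      rw [Finset.mem_compl] at hp hq
      obtain ⟨θ, b, hb, hpb, hfix⟩ := exists_exp_smul_wedge_mul_mulVec_single_eq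
        (mem_specialOrthogonalGroup_iff_transpose_mul_self.mp hA).1 hs hp hq hpq
      set X := θ • wedge (Pi.single p 1) b
      have hskew : Xᵀ = -X := by rw [transpose_smul, transpose_wedge, smul_neg]
      have hXA := ih _ (h ▸ Finset.card_lt_card (Finset.compl_ssubset_compl.mpr
        (Finset.ssubset_insert hp))) (mul_mem (exp_mem_specialOrthogonalGroup hskew) hA)
        (insert p s) hfix rfl
      have hX : NormedSpace.exp (-X) ∈ planeRotations ι :=
        ⟨-θ, _, b, by simp, hb, hpb, by rw [neg_smul]⟩
      rw [← one_mul A, ← exp_neg_mul_exp X, mul_assoc]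
      exact mul_mem (Submonoid.subset_closure hX) hXA

theorem specialOrthogonalGroup_le_closure_planeRotations :
    specialOrthogonalGroup ι ℝ ≤ Submonoid.closure (planeRotations ι) :=
  fun _ hA => mem_closure_planeRotations_of_mulVec_single_eq hA ∅ (by simp)

end Matrix

theorem stmt_17_general {n : ℕ}
    (A : Matrix (Fin n) (Fin n) ℝ)
    (hA : Aᵀ * A = 1)
    (hdet : A.det = 1) :
    ∃ (M : ℕ) (θ : Fin M → ℝ) (a b : Fin M → (Fin n → ℝ)),
      (∀ m, ∑ i, a m i ^ 2 = 1) ∧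
      (∀ m, ∑ i, b m i ^ 2 = 1) ∧
      (∀ m, ∑ i, a m i * b m i = 0) ∧
      (List.ofFn fun m : Fin M =>
          NormedSpace.exp
            (θ m • (Matrix.vecMulVec (a m) (b m) - Matrix.vecMulVec (b m) (a m)))).prod
        = A := by
  obtain ⟨l, hl, rfl⟩ := Submonoid.exists_list_of_mem_closure <|
    specialOrthogonalGroup_le_closure_planeRotations <|
      mem_specialOrthogonalGroup_iff_transpose_mul_self.mpr ⟨hA, hdet⟩
  choose θ a b ha hb hab hR using fun m : Fin l.length => hl _ (l.get_mem m)
  refine ⟨l.length, θ, a, b, fun m => ?_, fun m => ?_, hab, ?_⟩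
  · simpa [dotProduct, sq] using ha m
  · simpa [dotProduct, sq] using hb m
  · conv_rhs => rw [← List.ofFn_get l]
    exact congrArg _ (congrArg _ (funext hR))

/-- Every special orthogonal real `n × n` matrix (`n ≥ 2`) is a finite ordered product
of planar (Givens) rotations, each the matrix exponential of a rank-2 skew-symmetric
matrix `θ (a bᵀ − b aᵀ)` with `a, b` Euclidean-orthonormal. -/
theorem stmt_17 {n : ℕ} (hn : 2 ≤ n)
    (A : Matrix (Fin n) (Fin n) ℝ)
    (hA : Aᵀ * A = 1)
    (hdet : A.det = 1) :
    ∃ (M : ℕ) (θ : Fin M → ℝ) (a b : Fin M → (Fin n → ℝ)),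
      (∀ m, ∑ i, a m i ^ 2 = 1) ∧
      (∀ m, ∑ i, b m i ^ 2 = 1) ∧
      (∀ m, ∑ i, a m i * b m i = 0) ∧
      (List.ofFn fun m : Fin M =>
          NormedSpace.exp
            (θ m • (Matrix.vecMulVec (a m) (b m) - Matrix.vecMulVec (b m) (a m)))).prod
        = A :=
  stmt_17_general A hA hdet
end
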